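/- arXiv:1704.03715 — 3 statements merged into one kernel-verified Lean document; each statement's English description precedes it below -/
import Mathlib

section
/- Let N be a finite modular lattice, let θ_1,…,θ_s be its maximal congruences and let N_i := N/θ_i be its subdirectly irreducible factors. If every N_i is tightly partition embeddable, then N is tightly partition embeddable; more precisely, if for each i there is a tight embedding f_i : N_i → Part(n_i), then there is a tight embedding of N into Part(n_1 + ⋯ + n_s). -/
open scoped Classical
noncomputable section

/-! ### Lattice-theoretic preliminaries -/

/-- A tight embedding between bounded lattices: a cover-preserving lattice
homomorphism sending bottom to bottom. -/
def IsTightEmbedding {L L' : Type*} [Lattice L] [BoundedOrder L] [Lattice L'] [BoundedOrder L']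
    (f : L → L') : Prop :=
  (∀ a b : L, f (a ⊔ b) = f a ⊔ f b) ∧ (∀ a b : L, f (a ⊓ b) = f a ⊓ f b) ∧
    f ⊥ = ⊥ ∧ ∀ a b : L, a ⋖ b → f a ⋖ f b

/-- `Part(n)` is formalized as `Setoid (Fin n)`, the lattice of partitions of an
`n`-element set ordered by refinement. -/
def TightlyPartitionEmbeddable (L : Type*) [Lattice L] [BoundedOrder L] : Prop :=
  ∃ (n : ℕ) (f : L → Setoid (Fin n)), IsTightEmbedding f

/-- 2-distributivity. -/
def TwoDistrib (L : Type*) [Lattice L] : Prop :=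
  ∀ a b c d : L, a ⊓ (b ⊔ c ⊔ d) = (a ⊓ (b ⊔ c)) ⊔ (a ⊓ (b ⊔ d)) ⊔ (a ⊓ (c ⊔ d))

/-- `L` has a cover-preserving sublattice isomorphic to `M₄`: six elements
`b, t, a₁,…,a₄` with `b ⋖ aᵢ ⋖ t` (covers in `L`), `aᵢ ⊓ aⱼ = b`, `aᵢ ⊔ aⱼ = t`. -/
def HasCoverPreservingM4 (L : Type*) [Lattice L] : Prop :=
  ∃ (b t : L) (a : Fin 4 → L), Function.Injective a ∧
    (∀ i, b ⋖ a i) ∧ (∀ i, a i ⋖ t) ∧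
    (∀ i j, i ≠ j → a i ⊓ a j = b) ∧ ∀ i j, i ≠ j → a i ⊔ a j = t

/-- Thin: 2-distributive and without cover-preserving `M₄`. -/
def IsThin (L : Type*) [Lattice L] : Prop := TwoDistrib L ∧ ¬ HasCoverPreservingM4 L

/-- Height `d(L)` of a finite lattice: one less than the largest cardinality of a chain. -/
def latHeight (L : Type*) [Lattice L] [Fintype L] : ℕ :=
  (((Finset.univ : Finset (Finset L)).filter fun c : Finset L => IsChain (· ≤ ·) (c : Set L)).sup
    Finset.card) - 1

/-- The set `J(L)` of (nonzero) join-irreducible elements of a finite lattice. -/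
def JFinset (L : Type*) [Lattice L] [Fintype L] : Finset L :=
  Finset.univ.filter fun p => SupIrred p

/-- `J(a) = {p ∈ J(L) : p ≤ a}`. -/
def Jle {L : Type*} [Lattice L] [Fintype L] (a : L) : Finset L :=
  Finset.univ.filter fun p => SupIrred p ∧ p ≤ a

/-! ### Lattice congruences -/

/-- A congruence of a lattice. -/
structure LatCon (N : Type*) [Lattice N] where
  r : N → N → Prop
  refl : ∀ a, r a a
  symm : ∀ {a b}, r a b → r b a
  trans : ∀ {a b c}, r a b → r b c → r a c
  sup_comp : ∀ {a b c d}, r a b → r c d → r (a ⊔ c) (b ⊔ d)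
  inf_comp : ∀ {a b c d}, r a b → r c d → r (a ⊓ c) (b ⊓ d)

/-- Containment of congruences. -/
def LatCon.le {N : Type*} [Lattice N] (c d : LatCon N) : Prop := ∀ a b, c.r a b → d.r a b

/-- A maximal (proper) congruence: a coatom of the congruence lattice. -/
def LatCon.IsMaximal {N : Type*} [Lattice N] (c : LatCon N) : Prop :=
  (∃ a b, ¬ c.r a b) ∧ ∀ d : LatCon N, c.le d → d.le c ∨ ∀ a b, d.r a b

/-! ### Partial linear spaces -/

/-- A partial linear space with 3-element lines: any two distinct lines meet in
at most one point. -/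
structure PLS (α : Type*) where
  J : Finset α
  Λ : Finset (Finset α)
  line_sub : ∀ ℓ ∈ Λ, ℓ ⊆ J
  line_card : ∀ ℓ ∈ Λ, ℓ.card = 3
  line_inter : ∀ ℓ ∈ Λ, ∀ ℓ' ∈ Λ, ℓ ≠ ℓ' → (ℓ ∩ ℓ').card ≤ 1

/-- PLS-rank `rk(J,Λ) = |J| - |Λ|`. -/
def PLS.rk {α : Type*} (S : PLS α) : ℤ := (S.J.card : ℤ) - (S.Λ.card : ℤ)

/-- A path `[p₀,…,p_{n-1}]` together with its lines `ℓᵢ = [pᵢ,pᵢ₊₁]` (`i+1 < n`):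
the lines exist, are distinct, and consecutive lines are the only intersecting ones. -/
structure PLSPath (α : Type*) where
  n : ℕ
  two_le : 2 ≤ n
  p : ℕ → α
  line : ℕ → Finset α
  p_mem_left : ∀ i, i + 1 < n → p i ∈ line i
  p_mem_right : ∀ i, i + 1 < n → p (i + 1) ∈ line i
  p_ne : ∀ i, i + 1 < n → p i ≠ p (i + 1)
  lines_ne : ∀ i j, i < j → j + 1 < n → line i ≠ line j
  lines_inter_iff : ∀ i j, i < j → j + 1 < n → ((line i ∩ line j).Nonempty ↔ j = i + 1)

namespace PLSPath
variable {α : Type*}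

/-- The underlying point set `P*` of a path. -/
def ptSet (P : PLSPath α) : Finset α := (Finset.range (P.n - 1)).biUnion P.line

/-- First point of a path. -/
def first (P : PLSPath α) : α := P.p 0

/-- Last point of a path. -/
def last (P : PLSPath α) : α := P.p (P.n - 1)

/-- The set of lines of a path. -/
def lineSet (P : PLSPath α) : Finset (Finset α) := (Finset.range (P.n - 1)).image P.line

/-- The path lies in the line set `Λ`. -/
def In (P : PLSPath α) (Λ : Finset (Finset α)) : Prop := ∀ i, i + 1 < P.n → P.line i ∈ Λ

end PLSPath

/-- A cycle `(p₀,…,p_{n-1})`: a path whose closing line `[p_{n-1},p₀]` exists and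
contains a point not on any path line. -/
structure PLSCycle (α : Type*) extends PLSPath α where
  closing : Finset α
  closing_last : p (n - 1) ∈ closing
  closing_first : p 0 ∈ closing
  closing_new : ∃ q ∈ closing, ∀ i, i + 1 < n → q ∉ line i

namespace PLSCycle
variable {α : Type*}

/-- The cycle lies in the line set `Λ`. -/
def In (C : PLSCycle α) (Λ : Finset (Finset α)) : Prop :=
  C.toPLSPath.In Λ ∧ C.closing ∈ Λ

/-- The `i`-th `C`-line (for `i < n`; the last one is the closing line). -/
def cline (C : PLSCycle α) (i : ℕ) : Finset α :=
  if i + 1 < C.n then C.line i else C.closing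

/-- The underlying point set `C*` of a cycle. -/
def cptSet (C : PLSCycle α) : Finset α := (Finset.range C.n).biUnion C.cline

/-- The set `Λ*` of `C`-lines of a cycle. -/
def clineSet (C : PLSCycle α) : Finset (Finset α) := (Finset.range C.n).image C.cline

/-- `q` is the `C`-midpoint of the `i`-th `C`-line. -/
def IsMidpoint (C : PLSCycle α) (i : ℕ) (q : α) : Prop :=
  q ∈ C.cline i ∧ q ≠ C.p i ∧ q ≠ C.p ((i + 1) % C.n)

/-- `q` is a `C`-midpoint (of some `C`-line). -/
def IsMidpointPt (C : PLSCycle α) (q : α) : Prop := ∃ i < C.n, C.IsMidpoint i q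

/-- The set of `C`-midpoints. -/
def midSet (C : PLSCycle α) : Finset α := C.cptSet.filter fun q => C.IsMidpointPt q

end PLSCycle

/-- Acyclic PLS: it has no cycle. -/
def PLS.Acyclic {α : Type*} (S : PLS α) : Prop := ∀ C : PLSCycle α, ¬ C.In S.Λ

/-- QIMP: each line contains a quasi-isolated point. -/
def PLS.IsQIMP {α : Type*} (S : PLS α) : Prop :=
  ∀ ℓ ∈ S.Λ, ∃ q ∈ ℓ, ∀ ℓ' ∈ S.Λ, ℓ' ≠ ℓ → q ∉ ℓ'

/-- UMP: any line that occurs as a `C`-line has a unique midpoint, independent of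
the cycle. -/
def PLS.IsUMP {α : Type*} (S : PLS α) : Prop :=
  ∀ C C' : PLSCycle α, C.In S.Λ → C'.In S.Λ → ∀ i j, i < C.n → j < C'.n →
    C.cline i = C'.cline j →
    ∀ q q', C.IsMidpoint i q → C'.IsMidpoint j q' → q = q'

/-- `(J,Λ)` is a tree of the PLSes `F 0, …, F (t-1)`. -/
def PLS.IsTreeOf {α : Type*} (S : PLS α) (t : ℕ) (F : ℕ → PLS α) : Prop :=
  S.J = (Finset.range t).biUnion (fun i => (F i).J) ∧
  S.Λ = (Finset.range t).biUnion (fun i => (F i).Λ) ∧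
  ∀ i, 0 < i → i < t → ∃ x, (F i).J ∩ (Finset.range i).biUnion (fun j => (F j).J) = {x}

/-- Sparse PLS: a testifying ordering of the lines exists. -/
def PLS.Sparse {α : Type*} (S : PLS α) : Prop :=
  ∃ ℓ : ℕ → Finset α, (∀ i, i < S.Λ.card → ℓ i ∈ S.Λ) ∧
    (∀ i j, i < S.Λ.card → j < S.Λ.card → i ≠ j → ℓ i ≠ ℓ j) ∧
    ∀ i, i + 1 < S.Λ.card → ¬ ℓ (i + 1) ⊆ (Finset.range (i + 1)).biUnion ℓ

/-- Small girth: every cycle consists of three or four lines. -/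
def PLS.SmallGirth {α : Type*} (S : PLS α) : Prop :=
  ∀ C : PLSCycle α, C.In S.Λ → C.n = 3 ∨ C.n = 4

/-- Type 1 midpoint-link of the cycle `C`: a path from a `C`-midpoint to a
`C`-junction meeting `C*` only in its endpoints. -/
def IsType1Link {α : Type*} (C : PLSCycle α) (P : PLSPath α) : Prop :=
  C.IsMidpointPt P.first ∧ (∃ j < C.n, P.last = C.p j) ∧
    P.ptSet ∩ C.cptSet = {P.first, P.last}

/-- Type 2 midpoint-link of the cycle `C`: a path between two `C`-midpoints meeting
`C*` only in its endpoints. -/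
def IsType2Link {α : Type*} (C : PLSCycle α) (P : PLSPath α) : Prop :=
  C.IsMidpointPt P.first ∧ C.IsMidpointPt P.last ∧ P.first ≠ P.last ∧
    P.ptSet ∩ C.cptSet = {P.first, P.last}

/-- Benign type 1 link: the midpoint and junction sit on a common `C`-line. -/
def Benign1 {α : Type*} (C : PLSCycle α) (P : PLSPath α) : Prop :=
  ∃ i < C.n, P.first ∈ C.cline i ∧ P.last ∈ C.cline i

/-- Benign type 2 link: the two midpoints sit on intersecting `C`-lines. -/
def Benign2 {α : Type*} (C : PLSCycle α) (P : PLSPath α) : Prop :=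
  ∃ i, i < C.n ∧ ∃ j, j < C.n ∧ C.IsMidpoint i P.first ∧ C.IsMidpoint j P.last ∧
    (C.cline i ∩ C.cline j).Nonempty

/-- A benign midpoint-link (of either type). -/
def BenignLink {α : Type*} (C : PLSCycle α) (P : PLSPath α) : Prop :=
  (IsType1Link C P ∧ Benign1 C P) ∨ (IsType2Link C P ∧ Benign2 C P)

/-- BMPL: every midpoint-link of every cycle is benign. -/
def PLS.IsBMPL {α : Type*} (S : PLS α) : Prop :=
  ∀ C : PLSCycle α, C.In S.Λ → ∀ P : PLSPath α, P.In S.Λ →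
    (IsType1Link C P → Benign1 C P) ∧ (IsType2Link C P → Benign2 C P)

/-- All midpoint-links are of type 1, i.e. there are no type 2 midpoint-links. -/
def PLS.OnlyType1Links {α : Type*} (S : PLS α) : Prop :=
  ∀ C : PLSCycle α, C.In S.Λ → ∀ P : PLSPath α, P.In S.Λ → ¬ IsType2Link C P

/-- `S'` arises from `S` by adding the path `P`. -/
def AddsOnePath {α : Type*} (S' S : PLS α) (P : PLSPath α) : Prop :=
  P.In S'.Λ ∧ S'.J = S.J ∪ P.ptSet ∧ S.J ∩ P.ptSet = {P.first, P.last} ∧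
    (∀ i, i + 1 < P.n → P.line i ∉ S.Λ) ∧ S'.Λ = S.Λ ∪ P.lineSet

/-- `S'` arises from `S` by adding a benign midpoint-link. -/
def AddsBenignLink {α : Type*} (S' S : PLS α) : Prop :=
  ∃ (P : PLSPath α) (C : PLSCycle α), C.In S.Λ ∧ AddsOnePath S' S P ∧ BenignLink C P

/-- `S'` arises from `S` by adding a benign midpoint-link of type 1. -/
def AddsBenignLink1 {α : Type*} (S' S : PLS α) : Prop :=
  ∃ (P : PLSPath α) (C : PLSCycle α), C.In S.Λ ∧ AddsOnePath S' S P ∧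
    IsType1Link C P ∧ Benign1 C P

/-- Augmented UMP: obtained from a UMP by iteratively adding benign midpoint-links. -/
def PLS.IsAugmentedUMP {α : Type*} (S : PLS α) : Prop :=
  ∃ S₀ : PLS α, S₀.IsUMP ∧ Relation.ReflTransGen (fun X Y => AddsBenignLink Y X) S₀ S

/-- Augmented UMP of type 1: only benign midpoint-links of type 1 were added. -/
def PLS.IsAugmentedUMP1 {α : Type*} (S : PLS α) : Prop :=
  ∃ S₀ : PLS α, S₀.IsUMP ∧ Relation.ReflTransGen (fun X Y => AddsBenignLink1 Y X) S₀ S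

/-! ### Graphs -/

/-- `T` is the edge set of a triangle of `G`. -/
def IsTriangle {V : Type*} (G : SimpleGraph V) (T : Finset (Sym2 V)) : Prop :=
  ∃ a b c : V, G.Adj a b ∧ G.Adj b c ∧ G.Adj a c ∧ T = {s(a, b), s(b, c), s(a, c)}

/-- `Γ` is the edge set of a circuit of `G`. -/
def IsCircuitSet {V : Type*} (G : SimpleGraph V) (Γ : Finset (Sym2 V)) : Prop :=
  ∃ (v : V) (w : G.Walk v v), w.IsCycle ∧ w.edges.toFinset = Γ

/-- `Γ` is the edge set of a chordless circuit of `G`. -/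
def IsChordlessCircuit {V : Type*} (G : SimpleGraph V) (Γ : Finset (Sym2 V)) : Prop :=
  ∃ (v : V) (w : G.Walk v v), w.IsCycle ∧ w.edges.toFinset = Γ ∧
    ∀ a b : V, a ∈ w.support → b ∈ w.support → G.Adj a b → s(a, b) ∈ Γ

/-- `W` is the edge set of a wheel of `G` (degenerate wheel = triangle). -/
def IsWheel {V : Type*} (G : SimpleGraph V) (W : Finset (Sym2 V)) : Prop :=
  ∃ (n : ℕ) (hub : V) (v : ℕ → V), 2 ≤ n ∧
    (∀ i j, i < n → j < n → i ≠ j → v i ≠ v j) ∧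
    (∀ i, i < n → G.Adj hub (v i)) ∧
    (∀ i, i < n → G.Adj (v i) (v ((i + 1) % n))) ∧
    W = (Finset.range n).image (fun i => s(hub, v i)) ∪
        (Finset.range n).image (fun i => s(v i, v ((i + 1) % n)))

/-- Rank of an edge set `B` in the cycle matroid on the vertex set `V`:
`|V|` minus the number of connected components of `(V, B)`. -/
def grkOn (V : Type*) [Fintype V] (B : Finset (Sym2 V)) : ℕ :=
  Fintype.card V - Nat.card (SimpleGraph.fromEdgeSet (B : Set (Sym2 V))).ConnectedComponent

/-- Rank of the cycle matroid of the graph `G` (on its full edge set). -/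
def graphRank {V : Type*} [Fintype V] (G : SimpleGraph V) : ℕ :=
  Fintype.card V - Nat.card G.ConnectedComponent

/-- Closure of an edge set in the cycle matroid of `G`. -/
def graphCl {V : Type*} [Fintype V] (G : SimpleGraph V) (B : Finset (Sym2 V)) : Set (Sym2 V) :=
  {e | e ∈ G.edgeSet ∧ grkOn V (insert e B) = grkOn V B}

/-- The partition of the vertex set into connected components of `(V, B)`. -/
def compSetoid {V : Type*} (B : Finset (Sym2 V)) : Setoid V :=
  ⟨fun a b => (SimpleGraph.fromEdgeSet (B : Set (Sym2 V))).Reachable a b,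
    ⟨fun a => SimpleGraph.Reachable.refl a, fun h => h.symm, fun h h' => h.trans h'⟩⟩

/-- `ψ` line-preservingly models the PLS `S` by the graph `G`: it is a bijection from
the points onto the edges taking each line to (the edge set of) a triangle. -/
def LinePres {α V : Type*} (S : PLS α) (G : SimpleGraph V) (ψ : α → Sym2 V) : Prop :=
  Set.BijOn ψ (S.J : Set α) G.edgeSet ∧ ∀ ℓ ∈ S.Λ, IsTriangle G (ℓ.image ψ)

/-- Line-preserving rank-modeling by a graph. -/
def LinePresRankModels {α V : Type*} [Fintype V] (S : PLS α) (G : SimpleGraph V)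
    (ψ : α → Sym2 V) : Prop :=
  LinePres S G ψ ∧ (graphRank G : ℤ) = S.rk

/-- Cycle-preservation: the midpoints of each cycle map to a circuit of `G`. -/
def CyclePresCond {α V : Type*} (S : PLS α) (G : SimpleGraph V) (ψ : α → Sym2 V) : Prop :=
  ∀ C : PLSCycle α, C.In S.Λ → IsCircuitSet G (C.midSet.image ψ)

/-- Circuit-friendliness: each chordless circuit of `G` corresponds to a line or to
the set of midpoints of a cycle of `S`. -/
def CircuitFriendlyCond {α V : Type*} (S : PLS α) (G : SimpleGraph V) (ψ : α → Sym2 V) : Prop :=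
  ∀ Γ : Finset (Sym2 V), IsChordlessCircuit G Γ →
    (∃ ℓ ∈ S.Λ, ∀ x ∈ S.J, (ψ x ∈ Γ ↔ x ∈ ℓ)) ∨
    (∃ C : PLSCycle α, C.In S.Λ ∧ ∀ x ∈ S.J, (ψ x ∈ Γ ↔ C.IsMidpointPt x))

/-! ### Matroids -/

/-- A (finite) matroid on a finite ground set, given by its independent sets. -/
structure FinMatroid (β : Type*) where
  E : Finset β
  Indep : Finset β → Prop
  indep_subset : ∀ I, Indep I → I ⊆ E
  indep_empty : Indep ∅
  indep_mono : ∀ I J, Indep J → I ⊆ J → Indep I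
  indep_exchange : ∀ I J, Indep I → Indep J → I.card < J.card →
    ∃ x ∈ J, x ∉ I ∧ Indep (insert x I)

namespace FinMatroid
variable {β : Type*}

/-- Rank of a subset. -/
def rkOn (M : FinMatroid β) (X : Finset β) : ℕ :=
  (X.powerset.filter fun I => M.Indep I).sup Finset.card

/-- Rank of the matroid. -/
def rk (M : FinMatroid β) : ℕ := M.rkOn M.E

/-- Closure of a subset. -/
def cl (M : FinMatroid β) (X : Finset β) : Finset β :=
  M.E.filter fun e => M.rkOn (insert e (X ∩ M.E)) = M.rkOn (X ∩ M.E)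

/-- Simple matroid: all subsets of cardinality at most 2 are independent. -/
def IsSimple (M : FinMatroid β) : Prop :=
  ∀ X : Finset β, X ⊆ M.E → X.card ≤ 2 → M.Indep X

/-- Flat (closed set) of a matroid. -/
def Flat (M : FinMatroid β) (F : Finset β) : Prop := F ⊆ M.E ∧ M.cl F = F

/-- Binary matroid: representable over GF(2). -/
def IsBinary (M : FinMatroid β) : Prop :=
  ∃ (m : ℕ) (ρ : β → (Fin m → ZMod 2)),
    ∀ I : Finset β, I ⊆ M.E →
      (M.Indep I ↔ LinearIndependent (ZMod 2) fun x : {y // y ∈ I} => ρ x.1)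

/-- Graphic matroid: isomorphic to the cycle matroid of a graph. -/
def IsGraphic (M : FinMatroid β) : Prop :=
  ∃ (k : ℕ) (G : SimpleGraph (Fin k)) (φ : β → Sym2 (Fin k)),
    Set.BijOn φ (M.E : Set β) G.edgeSet ∧
    ∀ I : Finset β, I ⊆ M.E →
      (M.Indep I ↔ ∀ Γ : Finset (Sym2 (Fin k)), IsCircuitSet G Γ →
        ¬ (Γ : Set (Sym2 (Fin k))) ⊆ φ '' (I : Set β))

end FinMatroid

/-- `ψ` line-preservingly models the PLS `S` by the matroid `M`: a bijection from the
points onto the ground set taking each line to a dependent set. -/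
def LinePresMatroid {α β : Type*} (S : PLS α) (M : FinMatroid β) (ψ : α → β) : Prop :=
  Set.BijOn ψ (S.J : Set α) (M.E : Set β) ∧ ∀ ℓ ∈ S.Λ, ¬ M.Indep (ℓ.image ψ)

/-- Graph-trigger: every simple binary matroid that line-preservingly rank-models `S`
is graphic. -/
def PLS.GraphTrigger {α : Type*} (S : PLS α) : Prop :=
  ∀ (β : Type) (M : FinMatroid β) (ψ : α → β),
    M.IsSimple → M.IsBinary → LinePresMatroid S M ψ → (M.rk : ℤ) = S.rk → M.IsGraphic

/-! ### Lines of modular lattices, MoPLSes, lattice-modeling -/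

/-- All pairs of distinct elements of `m` have the same join. -/
def ConstJoin {L : Type*} [Lattice L] (m : Finset L) : Prop :=
  ∀ p ∈ m, ∀ q ∈ m, ∀ p' ∈ m, ∀ q' ∈ m, p ≠ q → p' ≠ q' → p ⊔ q = p' ⊔ q'

/-- A line of a modular lattice: a 3-element subset of `J(L)` with constant pairwise
join, maximal with this property. -/
def IsLine (L : Type*) [Lattice L] [Fintype L] (ℓ : Finset L) : Prop :=
  ℓ ⊆ JFinset L ∧ ℓ.card = 3 ∧ ConstJoin ℓ ∧
    ∀ m : Finset L, m ⊆ JFinset L → ℓ ⊆ m → ConstJoin m → m = ℓ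

/-- The join of a line. -/
def lineJoin {L : Type*} [Lattice L] [BoundedOrder L] (ℓ : Finset L) : L := ℓ.sup id

/-- A MoPLS of `L`: the PLS on `J(L)` whose lines form a maximal family of pairwise
inequivalent lines of `L`. -/
def IsMoPLS (L : Type*) [Lattice L] [BoundedOrder L] [Fintype L] (S : PLS L) : Prop :=
  S.J = JFinset L ∧ (∀ ℓ ∈ S.Λ, IsLine L ℓ) ∧
    (∀ ℓ ∈ S.Λ, ∀ ℓ' ∈ S.Λ, ℓ ≠ ℓ' → lineJoin ℓ ≠ lineJoin ℓ') ∧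
    ∀ m : Finset L, IsLine L m → ∃ ℓ ∈ S.Λ, lineJoin ℓ = lineJoin m

/-- A graph lattice-models a finite lattice `L` via `φ`: `φ` is a bijection from
`J(L)` onto the edge set, all sets `φ(J(a))` are closed in the cycle matroid, and the
rank of the cycle matroid equals the height of `L`. -/
def LatticeModelsGraph (L : Type*) [Lattice L] [BoundedOrder L] [Fintype L]
    {V : Type*} [Fintype V] (G : SimpleGraph V) (φ : L → Sym2 V) : Prop :=
  Set.BijOn φ (JFinset L : Set L) G.edgeSet ∧
    (∀ a : L, graphCl G ((Jle a).image φ) = (((Jle a).image φ : Finset (Sym2 V)) : Set (Sym2 V))) ∧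
    graphRank G = latHeight L


/-!
In a finite modular lattice every prime quotient `a ⋖ b` is separated by exactly one maximal
congruence. Collapsing the intervals that contain no prime quotient projective to `(a, b)` is a
congruence, and it is maximal: a congruence identifying `a` with `b` identifies every prime
quotient projective to `(a, b)`, and all other prime quotients are already collapsed. Two distinct
maximal congruences join to the total congruence, yet pushing a chain of identifications from `a`
to `b` through `z ↦ (z ⊔ a) ⊓ b` shows that one of them already identifies `a` with `b`.

Hence `a ↦ (a/θᵢ)ᵢ` maps covers to covers of `∏ Nᵢ`. Composing with the `fᵢ` and with the disjoint
union of partitions, which identifies `∏ Part(nᵢ)` with an order-convex sublattice of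
`Part(n₁ + ⋯ + nₛ)`, gives the tight embedding.
-/

open Relation

namespace LatCon

variable {N : Type*} [Lattice N]

lemma ext {c d : LatCon N} (h : c.r = d.r) : c = d := by
  cases c; cases d; cases h; rfl

lemma rel_inf_sup (c : LatCon N) {u v : N} (h : c.r u v) : c.r (u ⊓ v) (u ⊔ v) :=
  c.trans (by simpa using c.inf_comp h (c.refl v))
    (c.symm (by simpa using c.sup_comp h (c.refl v)))

lemma rel_of_le_of_le (c : LatCon N) {p q x y : N} (h : c.r p q)
    (hpx : p ≤ x) (hxy : x ≤ y) (hyq : y ≤ q) : c.r x y := by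
  have hxq : c.r x q := by
    simpa [sup_eq_right.mpr hpx, sup_eq_left.mpr (hxy.trans hyq)] using c.sup_comp h (c.refl x)
  simpa [inf_eq_left.mpr hxy, inf_eq_right.mpr hyq] using c.inf_comp hxq (c.refl y)

lemma rel_of_forall_covBy [Finite N] (c : LatCon N) (h : ∀ x y : N, x ⋖ y → c.r x y)
    (u v : N) : c.r u v := by
  have rel_of_le : ∀ q p : N, p ≤ q → c.r p q := by
    intro q
    induction q using WellFoundedLT.induction with
    | _ q ih =>
      intro p hpq
      rcases hpq.eq_or_lt with rfl | hlt
      · exact c.refl p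
      · obtain ⟨z, hpz, hzq⟩ := exists_le_covBy_of_lt hlt
        exact c.trans (ih z hzq.lt p hpz) (h z q hzq)
  exact c.trans (c.symm (rel_of_le u _ inf_le_left)) (rel_of_le v _ inf_le_right)

lemma reflTransGen_map {c d : LatCon N} {f : N → N}
    (hf : ∀ e : LatCon N, ∀ x y, e.r x y → e.r (f x) (f y)) {x y : N}
    (h : ReflTransGen (fun x y => c.r x y ∨ d.r x y) x y) :
    ReflTransGen (fun x y => c.r x y ∨ d.r x y) (f x) (f y) :=
  ReflTransGen.lift f (fun _ _ => Or.imp (hf c _ _) (hf d _ _)) _ _ h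

def sup (c d : LatCon N) : LatCon N where
  r := ReflTransGen fun x y => c.r x y ∨ d.r x y
  refl _ := .refl
  symm h := ReflTransGen.mono (fun _ _ => Or.imp c.symm d.symm) _ _ (ReflTransGen.swap _ _ h)
  trans := .trans
  sup_comp h h' :=
    (reflTransGen_map (fun e _ _ hr => e.sup_comp hr (e.refl _)) h).trans
      (reflTransGen_map (fun e _ _ hr => e.sup_comp (e.refl _) hr) h')
  inf_comp h h' :=
    (reflTransGen_map (fun e _ _ hr => e.inf_comp hr (e.refl _)) h).trans
      (reflTransGen_map (fun e _ _ hr => e.inf_comp (e.refl _) hr) h')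

lemma sup_not_rel_of_covBy {a b : N} (hab : a ⋖ b) {c d : LatCon N}
    (hca : ¬ c.r a b) (hdb : ¬ d.r a b) : ¬ (c.sup d).r a b := by
  -- `z ↦ (z ⊔ a) ⊓ b` maps a chain of identifications from `a` to `b` into `{a, b}`
  have hchain : ∀ z, ReflTransGen (fun x y => c.r x y ∨ d.r x y) a z →
      (z ⊔ a) ⊓ b = a := by
    intro z hz
    induction hz with
    | refl => simp [hab.le]
    | @tail y z _ hyz ih =>
      have hstep := hyz.imp (fun h => c.inf_comp (c.sup_comp h (c.refl a)) (c.refl b))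
        (fun h => d.inf_comp (d.sup_comp h (d.refl a)) (d.refl b))
      rw [ih] at hstep
      rcases hab.eq_or_eq (le_inf le_sup_right hab.le) inf_le_right with h | h
      · exact h
      · rw [h] at hstep
        exact (hstep.elim hca hdb).elim
  intro h
  have := hchain b h
  rw [sup_eq_left.mpr hab.le, inf_idem] at this
  exact hab.ne' this

lemma eq_of_isMaximal_of_not_rel {a b : N} (hab : a ⋖ b) {c d : LatCon N}
    (hc : c.IsMaximal) (hd : d.IsMaximal) (hca : ¬ c.r a b) (hdb : ¬ d.r a b) : c = d := by
  have hd_sup : d.le (c.sup d) := fun _ _ h => .single (.inr h)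
  rcases hc.2 (c.sup d) (fun _ _ h => .single (.inl h)) with hsup_le | hsup_top
  · have hdc : d.le c := fun x y h => hsup_le x y (hd_sup x y h)
    rcases hd.2 c hdc with hcd | hc_top
    · exact ext (funext₂ fun x y => propext ⟨hcd x y, hdc x y⟩)
    · exact absurd (hc_top a b) hca
  · exact absurd (hsup_top a b) (sup_not_rel_of_covBy hab hca hdb)

end LatCon

section Projectivity

variable {N : Type*} [Lattice N]

def UpPerspective (p q : N × N) : Prop := p.1 = p.2 ⊓ q.1 ∧ q.2 = p.2 ⊔ q.1

def Perspective (p q : N × N) : Prop := UpPerspective p q ∨ UpPerspective q p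

def Projective : N × N → N × N → Prop := ReflTransGen Perspective

lemma LatCon.rel_iff_of_upPerspective (c : LatCon N) {p q : N × N} (h : UpPerspective p q) :
    c.r p.1 p.2 ↔ c.r q.1 q.2 := by
  obtain ⟨h1, h2⟩ := h
  constructor
  · intro hp
    have hle : p.1 ≤ q.1 := h1.le.trans inf_le_right
    simpa [sup_eq_right.mpr hle, ← h2] using c.sup_comp hp (c.refl q.1)
  · intro hq
    have hle : p.2 ≤ q.2 := h2.ge.trans' le_sup_left
    simpa [inf_eq_right.mpr hle, inf_comm q.1, ← h1] using c.inf_comp hq (c.refl p.2)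

lemma LatCon.rel_iff_of_projective (c : LatCon N) {p q : N × N} (h : Projective p q) :
    c.r p.1 p.2 ↔ c.r q.1 q.2 := by
  induction h with
  | refl => rfl
  | tail _ hpersp ih =>
    rcases hpersp with h | h
    exacts [ih.trans (c.rel_iff_of_upPerspective h), ih.trans (c.rel_iff_of_upPerspective h).symm]

def Avoids (a b p q : N) : Prop :=
  ∀ x y : N, p ≤ x → y ≤ q → x ⋖ y → ¬ Projective (a, b) (x, y)

lemma Avoids.mono {a b p q p' q' : N} (h : Avoids a b p q) (hp : p ≤ p') (hq : q' ≤ q) :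
    Avoids a b p' q' := fun x y hx hy hc => h x y (hp.trans hx) (hy.trans hq) hc

lemma avoids_of_covBy {a b x y : N} (hxy : x ⋖ y) (h : ¬ Projective (a, b) (x, y)) :
    Avoids a b x y := by
  intro x' y' hx' hy' hc'
  obtain rfl : x' = x := (hxy.eq_or_eq hx' (hc'.le.trans hy')).resolve_right
    fun h => (h ▸ hc'.lt).not_ge hy'
  obtain rfl : y' = y := (hxy.eq_or_eq hc'.le hy').resolve_left fun h => hc'.ne h.symm
  exact h

variable [IsModularLattice N]

lemma upPerspective_inf_of_covBy {x y q : N} (hxy : x ⋖ y) (hne : x ⊓ q ≠ y ⊓ q) :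
    x ⊓ q ⋖ y ⊓ q ∧ UpPerspective (x ⊓ q, y ⊓ q) (x, y) := by
  have hinf : x ⊓ (y ⊓ q) = x ⊓ q := by rw [← inf_assoc, inf_eq_left.mpr hxy.le]
  have hsup : x ⊔ y ⊓ q = y := by
    refine (hxy.eq_or_eq le_sup_left (sup_le hxy.le inf_le_left)).resolve_left fun h => hne ?_
    exact le_antisymm (inf_le_inf_right q hxy.le) (le_inf (h ▸ le_sup_right) inf_le_right)
  refine ⟨?_, hinf.symm.trans (inf_comm _ _), hsup.symm.trans (sup_comm _ _)⟩
  have := inf_covBy_of_covBy_sup_left (a := x) (b := y ⊓ q) (by rwa [hsup])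
  rwa [hinf] at this

lemma upPerspective_sup_of_covBy {x y q : N} (hxy : x ⋖ y) (hne : x ⊔ q ≠ y ⊔ q) :
    x ⊔ q ⋖ y ⊔ q ∧ UpPerspective (x, y) (x ⊔ q, y ⊔ q) := by
  have hsup : y ⊔ (x ⊔ q) = y ⊔ q := by rw [← sup_assoc, sup_eq_left.mpr hxy.le]
  have hinf : y ⊓ (x ⊔ q) = x := by
    refine (hxy.eq_or_eq (le_inf hxy.le le_sup_left) inf_le_left).resolve_right fun h => hne ?_
    exact le_antisymm (sup_le_sup_right hxy.le q) (sup_le (h ▸ inf_le_right) le_sup_right)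
  refine ⟨?_, hinf.symm, hsup.symm⟩
  have := covBy_sup_of_inf_covBy_left (a := y) (b := x ⊔ q) (by rwa [hinf])
  rwa [hsup] at this

lemma Avoids.trans {a b p q r : N} (hpq : p ≤ q) (hqr : q ≤ r)
    (h₁ : Avoids a b p q) (h₂ : Avoids a b q r) : Avoids a b p r := by
  intro x y hx hy hxy hproj
  by_cases hinf : x ⊓ q = y ⊓ q
  · by_cases hsup : x ⊔ q = y ⊔ q
    · exact hxy.ne (eq_of_le_of_inf_le_of_sup_le hxy.le hinf.ge hsup.ge)
    · obtain ⟨hcov, hpersp⟩ := upPerspective_sup_of_covBy hxy hsup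
      exact h₂ _ _ le_sup_right (sup_le hy hqr) hcov (hproj.tail (.inl hpersp))
  · obtain ⟨hcov, hpersp⟩ := upPerspective_inf_of_covBy hxy hinf
    exact h₁ _ _ (le_inf hx hpq) inf_le_right hcov (hproj.tail (.inr hpersp))

lemma Avoids.sup_right {a b p q : N} (hpq : p ≤ q) (h : Avoids a b p q) (w : N) :
    Avoids a b (p ⊔ w) (q ⊔ w) := by
  intro x y hx hy hxy hproj
  have hwx : w ≤ x := le_sup_right.trans hx
  have hrecover : ∀ z, w ≤ z → z ≤ q ⊔ w → w ⊔ q ⊓ z = z := fun z hwz hz => by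
    rw [← sup_inf_assoc_of_le q hwz, sup_comm, inf_eq_right.mpr hz]
  have hne : x ⊓ q ≠ y ⊓ q := fun heq => hxy.ne <| by
    rw [← hrecover x hwx (hxy.le.trans hy), ← hrecover y (hwx.trans hxy.le) hy,
      inf_comm q, inf_comm q, heq]
  obtain ⟨hcov, hpersp⟩ := upPerspective_inf_of_covBy hxy hne
  exact h _ _ (le_inf (le_sup_left.trans hx) hpq) inf_le_right hcov (hproj.tail (.inr hpersp))

lemma Avoids.inf_right {a b p q : N} (hpq : p ≤ q) (h : Avoids a b p q) (w : N) :
    Avoids a b (p ⊓ w) (q ⊓ w) := by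
  intro x y hx hy hxy hproj
  have hyw : y ≤ w := hy.trans inf_le_right
  have hrecover : ∀ z, p ⊓ w ≤ z → z ≤ w → (z ⊔ p) ⊓ w = z := fun z hz hzw => by
    rw [sup_inf_assoc_of_le p hzw, sup_eq_left.mpr hz]
  have hne : x ⊔ p ≠ y ⊔ p := fun heq => hxy.ne <| by
    rw [← hrecover x hx (hxy.le.trans hyw), ← hrecover y (hx.trans hxy.le) hyw, heq]
  obtain ⟨hcov, hpersp⟩ := upPerspective_sup_of_covBy hxy hne
  exact h _ _ le_sup_right (sup_le (hy.trans inf_le_left) hpq) hcov (hproj.tail (.inl hpersp))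

end Projectivity

section AvoidingCongruence

variable {N : Type*} [Lattice N] [IsModularLattice N]

lemma avoids_inf_sup_trans {a b u v w : N} (h₁ : Avoids a b (u ⊓ v) (u ⊔ v))
    (h₂ : Avoids a b (v ⊓ w) (v ⊔ w)) : Avoids a b (u ⊓ w) (u ⊔ w) := by
  have hup : Avoids a b v (u ⊔ v ⊔ w) :=
    (h₁.mono inf_le_right le_rfl).trans le_sup_right le_sup_left
      ((h₂.sup_right inf_le_sup (u ⊔ v)).mono (by simp [inf_le_of_left_le])
        (by simp [le_sup_of_le_left]))
  have hdown : Avoids a b (u ⊓ v ⊓ w) v :=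
    ((h₂.inf_right inf_le_sup (u ⊓ v)).mono (by simp [inf_le_of_left_le, inf_le_of_right_le])
      (by simp [inf_le_of_right_le])).trans inf_le_left inf_le_right (h₁.mono le_rfl le_sup_right)
  exact (hdown.trans (by simp [inf_le_of_left_le]) (le_sup_right.trans le_sup_left) hup).mono
    (by simp [inf_le_of_left_le]) (by simp [le_sup_of_le_left])

lemma avoids_inf_sup_sup_right {a b u v : N} (h : Avoids a b (u ⊓ v) (u ⊔ v)) (w : N) :
    Avoids a b ((u ⊔ w) ⊓ (v ⊔ w)) (u ⊔ w ⊔ (v ⊔ w)) :=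
  (h.sup_right inf_le_sup w).mono (by simp [le_sup_of_le_left]) (by simp [le_sup_of_le_left])

lemma avoids_inf_sup_inf_right {a b u v : N} (h : Avoids a b (u ⊓ v) (u ⊔ v)) (w : N) :
    Avoids a b (u ⊓ w ⊓ (v ⊓ w)) (u ⊓ w ⊔ v ⊓ w) :=
  (h.inf_right inf_le_sup w).mono (by simp [inf_le_of_left_le])
    (by simp [le_sup_of_le_left, le_sup_of_le_right])

def LatCon.avoiding (a b : N) : LatCon N where
  r u v := Avoids a b (u ⊓ v) (u ⊔ v)
  refl u x y hx hy hxy _ :=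
    (hxy.lt.trans_le (hy.trans (sup_idem u).le)).not_ge ((inf_idem u).ge.trans hx)
  symm h := by rwa [inf_comm, sup_comm]
  trans := avoids_inf_sup_trans
  sup_comp {x y z t} h h' := by
    have h'' : Avoids a b ((y ⊔ z) ⊓ (y ⊔ t)) (y ⊔ z ⊔ (y ⊔ t)) := by
      simpa only [sup_comm y] using avoids_inf_sup_sup_right h' y
    exact avoids_inf_sup_trans (avoids_inf_sup_sup_right h z) h''
  inf_comp {x y z t} h h' := by
    have h'' : Avoids a b (y ⊓ z ⊓ (y ⊓ t)) (y ⊓ z ⊔ y ⊓ t) := by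
      simpa only [inf_comm y] using avoids_inf_sup_inf_right h' y
    exact avoids_inf_sup_trans (avoids_inf_sup_inf_right h z) h''

lemma LatCon.not_avoiding_rel {a b : N} (hab : a ⋖ b) : ¬ (avoiding a b).r a b :=
  fun h => h a b inf_le_left le_sup_right hab .refl

lemma LatCon.isMaximal_avoiding [Finite N] {a b : N} (hab : a ⋖ b) :
    (avoiding a b).IsMaximal := by
  refine ⟨⟨a, b, not_avoiding_rel hab⟩, fun d hle => ?_⟩
  by_cases hd : d.r a b
  · right
    refine d.rel_of_forall_covBy fun x y hxy => ?_
    by_cases hproj : Projective (a, b) (x, y)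
    · exact (d.rel_iff_of_projective hproj).mp hd
    · apply hle
      simpa [avoiding, inf_eq_left.mpr hxy.le, sup_eq_right.mpr hxy.le] using
        avoids_of_covBy hxy hproj
  · left
    intro u v huv x y hx hy hxy hproj
    exact hd ((d.rel_iff_of_projective hproj).mpr
      (d.rel_of_le_of_le (d.rel_inf_sup huv) hx hxy.le hy))

lemma LatCon.exists_isMaximal_not_rel [Finite N] {a b : N} (hab : a ⋖ b) :
    ∃ c : LatCon N, c.IsMaximal ∧ ¬ c.r a b :=
  ⟨avoiding a b, isMaximal_avoiding hab, not_avoiding_rel hab⟩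

end AvoidingCongruence

section TightEmbedding

variable {α β γ : Type*} [Lattice α] [BoundedOrder α] [Lattice β] [BoundedOrder β]
  [Lattice γ] [BoundedOrder γ]

lemma IsTightEmbedding.comp {g : β → γ} {f : α → β} (hg : IsTightEmbedding g)
    (hf : IsTightEmbedding f) : IsTightEmbedding (g ∘ f) :=
  ⟨fun a b => by simp [hf.1, hg.1], fun a b => by simp [hf.2.1, hg.2.1],
    by simp [hf.2.2.1, hg.2.2.1], fun _ _ h => hg.2.2.2 _ _ (hf.2.2.2 _ _ h)⟩

lemma IsTightEmbedding.piMap {ι : Type*} {L L' : ι → Type*} [∀ i, Lattice (L i)]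
    [∀ i, BoundedOrder (L i)] [∀ i, Lattice (L' i)] [∀ i, BoundedOrder (L' i)]
    {f : ∀ i, L i → L' i} (hf : ∀ i, IsTightEmbedding (f i)) : IsTightEmbedding (Pi.map f) := by
  refine ⟨fun a b => funext fun i => (hf i).1 _ _, fun a b => funext fun i => (hf i).2.1 _ _,
    funext fun i => (hf i).2.2.1, fun a b hab => ?_⟩
  obtain ⟨i, hi, hrest⟩ := Pi.covBy_iff.mp hab
  exact Pi.covBy_iff.mpr ⟨i, (hf i).2.2.2 _ _ hi, fun j hj => congrArg (f j) (hrest j hj)⟩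

lemma OrderIso.isTightEmbedding (e : α ≃o β) : IsTightEmbedding e :=
  ⟨e.map_sup, e.map_inf, e.map_bot, fun _ _ h => (apply_covBy_apply_iff e).mpr h⟩

lemma OrderEmbedding.isTightEmbedding (f : α ↪o β) (hf : (Set.range f).OrdConnected)
    (hbot : f ⊥ = ⊥) : IsTightEmbedding f := by
  refine ⟨fun a b => ?_, fun a b => ?_, hbot, fun _ _ h => h.image f hf⟩
  · obtain ⟨c, hc⟩ := hf.out ⟨a, rfl⟩ ⟨a ⊔ b, rfl⟩
      ⟨le_sup_left, sup_le (f.monotone le_sup_left) (f.monotone le_sup_right)⟩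
    refine le_antisymm ?_ (sup_le (f.monotone le_sup_left) (f.monotone le_sup_right))
    rw [← hc]
    refine f.monotone (sup_le (f.le_iff_le.mp ?_) (f.le_iff_le.mp ?_)) <;> rw [hc]
    exacts [le_sup_left, le_sup_right]
  · obtain ⟨c, hc⟩ := hf.out ⟨a ⊓ b, rfl⟩ ⟨a, rfl⟩
      ⟨le_inf (f.monotone inf_le_left) (f.monotone inf_le_right), inf_le_left⟩
    refine le_antisymm (le_inf (f.monotone inf_le_left) (f.monotone inf_le_right)) ?_
    rw [← hc]
    refine f.monotone (le_inf (f.le_iff_le.mp ?_) (f.le_iff_le.mp ?_)) <;> rw [hc]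
    exacts [inf_le_left, inf_le_right]

end TightEmbedding

namespace Setoid

variable {ι : Type*} {β : ι → Type*}

def sigma (s : ∀ i, Setoid (β i)) : Setoid (Σ i, β i) :=
  ker fun x => (⟨x.1, Quotient.mk (s x.1) x.2⟩ : Σ i, Quotient (s i))

lemma sigma_fst_eq {s : ∀ i, Setoid (β i)} {x y : Σ i, β i} (h : sigma s x y) : x.1 = y.1 := by
  have h' : (⟨x.1, Quotient.mk (s x.1) x.2⟩ : Σ i, Quotient (s i)) =
      ⟨y.1, Quotient.mk (s y.1) y.2⟩ := h
  exact (Sigma.mk.inj_iff.mp h').1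

lemma sigma_mk_mk {s : ∀ i, Setoid (β i)} {i : ι} {u v : β i} :
    sigma s ⟨i, u⟩ ⟨i, v⟩ ↔ s i u v := by
  rw [sigma, ker_def]
  simp [Quotient.eq]

lemma sigma_le_sigma {s t : ∀ i, Setoid (β i)} : sigma s ≤ sigma t ↔ s ≤ t := by
  refine ⟨fun h i u v huv => sigma_mk_mk.mp (h (sigma_mk_mk.mpr huv)), fun h => ?_⟩
  rintro ⟨i, u⟩ ⟨j, v⟩ huv
  obtain rfl : i = j := sigma_fst_eq huv
  exact sigma_mk_mk.mpr (h i (sigma_mk_mk.mp huv))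

lemma eq_sigma_comap_of_le {r : Setoid (Σ i, β i)} {t : ∀ i, Setoid (β i)} (h : r ≤ sigma t) :
    r = sigma fun i => r.comap (Sigma.mk i) := by
  ext ⟨i, u⟩ ⟨j, v⟩
  constructor
  · intro huv
    obtain rfl : i = j := sigma_fst_eq (h huv)
    exact sigma_mk_mk.mpr huv
  · intro huv
    obtain rfl : i = j := sigma_fst_eq huv
    exact sigma_mk_mk.mp huv

def sigmaEmbedding : (∀ i, Setoid (β i)) ↪o Setoid (Σ i, β i) :=
  OrderEmbedding.ofMapLEIff sigma fun _ _ => sigma_le_sigma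

lemma ordConnected_range_sigmaEmbedding :
    (Set.range (sigmaEmbedding (β := β))).OrdConnected :=
  ⟨fun _ _ _ ⟨_, ht⟩ _ hr => ⟨_, (eq_sigma_comap_of_le (hr.2.trans ht.ge)).symm⟩⟩

lemma sigma_bot : sigma (fun i => (⊥ : Setoid (β i))) = ⊥ := by
  refine le_antisymm ?_ bot_le
  rintro ⟨i, u⟩ ⟨j, v⟩ huv
  obtain rfl : i = j := sigma_fst_eq huv
  exact congrArg (Sigma.mk i) (sigma_mk_mk.mp huv)

lemma isTightEmbedding_sigma : IsTightEmbedding (sigma (β := β)) :=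
  sigmaEmbedding.isTightEmbedding ordConnected_range_sigmaEmbedding sigma_bot

def _root_.Equiv.setoidCongr {α α' : Type*} (e : α ≃ α') : Setoid α ≃o Setoid α' where
  toFun r := r.comap e.symm
  invFun r := r.comap e
  left_inv r := by ext; simp [comap_rel]
  right_inv r := by ext; simp [comap_rel]
  map_rel_iff' {r r'} := by
    refine ⟨fun h x y hxy => ?_, fun h x y hxy => h hxy⟩
    have h' : r (e.symm (e x)) (e.symm (e y)) → r' (e.symm (e x)) (e.symm (e y)) :=
      @h (e x) (e y)
    simpa using h' (by simpa using hxy)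

end Setoid

namespace LatticeHom

variable {α β : Type*} [Lattice α] [Lattice β]

lemma map_bot_of_surjective [OrderBot α] [OrderBot β] (f : LatticeHom α β)
    (hf : Function.Surjective f) : f ⊥ = ⊥ := by
  obtain ⟨x, hx⟩ := hf ⊥
  exact le_bot_iff.mp (hx ▸ OrderHomClass.mono f bot_le)

lemma covBy_of_surjective (f : LatticeHom α β) (hf : Function.Surjective f) {a b : α}
    (hab : a ⋖ b) (hne : f a ≠ f b) : f a ⋖ f b := by
  refine ⟨lt_of_le_of_ne (OrderHomClass.mono f hab.le) hne, fun y hay hyb => ?_⟩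
  obtain ⟨z, rfl⟩ := hf y
  have himage : f ((a ⊔ z) ⊓ b) = f z := by
    rw [map_inf, map_sup, sup_eq_right.mpr hay.le, inf_eq_left.mpr hyb.le]
  rcases hab.eq_or_eq (le_inf le_sup_left hab.le) inf_le_right with h | h
  · exact hay.ne (h ▸ himage)
  · exact hyb.ne (h ▸ himage).symm

end LatticeHom

lemma isTightEmbedding_pi_of_maximal_congruences {N : Type*} [Lattice N] [BoundedOrder N]
    [Finite N] [IsModularLattice N] {ι : Type*} {Ni : ι → Type*} [∀ i, Lattice (Ni i)]
    [∀ i, BoundedOrder (Ni i)] (θ : ι → LatCon N) (hmax : ∀ i, (θ i).IsMaximal)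
    (hinj : Function.Injective θ) (hall : ∀ c : LatCon N, c.IsMaximal → ∃ i, c = θ i)
    (T : ∀ i, LatticeHom N (Ni i)) (hsurj : ∀ i, Function.Surjective (T i))
    (hker : ∀ i a b, (θ i).r a b ↔ T i a = T i b) : IsTightEmbedding fun a i => T i a := by
  refine ⟨fun a b => funext fun i => map_sup _ _ _, fun a b => funext fun i => map_inf _ _ _,
    funext fun i => (T i).map_bot_of_surjective (hsurj i), fun a b hab => ?_⟩
  obtain ⟨c, hc, hcab⟩ := LatCon.exists_isMaximal_not_rel hab
  obtain ⟨i, rfl⟩ := hall c hc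
  refine Pi.covBy_iff.mpr ⟨i, (T i).covBy_of_surjective (hsurj i) hab
    fun h => hcab ((hker i a b).mpr h), fun j hj => ?_⟩
  by_contra hne
  exact hj (hinj (LatCon.eq_of_isMaximal_of_not_rel hab (hmax j) (hmax i)
    (fun h => hne ((hker j a b).mp h)) hcab))

theorem statement_0_general {N : Type} [Lattice N] [BoundedOrder N] [Fintype N] [IsModularLattice N]
    (s : ℕ) (θ : Fin s → LatCon N)
    (hmax : ∀ i, (θ i).IsMaximal)
    (hinj : Function.Injective θ)
    (hall : ∀ c : LatCon N, c.IsMaximal → ∃ i, c = θ i)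
    (Ni : Fin s → Type) [∀ i, Lattice (Ni i)] [∀ i, BoundedOrder (Ni i)]
    (T : ∀ i, N → Ni i)
    (hTsup : ∀ i a b, T i (a ⊔ b) = T i a ⊔ T i b)
    (hTinf : ∀ i a b, T i (a ⊓ b) = T i a ⊓ T i b)
    (hTsurj : ∀ i, Function.Surjective (T i))
    (hker : ∀ i a b, (θ i).r a b ↔ T i a = T i b)
    (n : Fin s → ℕ)
    (hf : ∀ i, ∃ f : Ni i → Setoid (Fin (n i)), IsTightEmbedding f) :
    ∃ g : N → Setoid (Fin (Finset.univ.sum n)), IsTightEmbedding g := by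
  choose f hf using hf
  let T' : ∀ i, LatticeHom N (Ni i) := fun i => ⟨⟨T i, hTsup i⟩, hTinf i⟩
  have hT' : IsTightEmbedding fun a i => T' i a :=
    isTightEmbedding_pi_of_maximal_congruences θ hmax hinj hall T' hTsurj hker
  exact ⟨_, finSigmaFinEquiv.setoidCongr.isTightEmbedding.comp
    (Setoid.isTightEmbedding_sigma.comp ((IsTightEmbedding.piMap hf).comp hT'))⟩

theorem statement_0 {N : Type} [Lattice N] [BoundedOrder N] [Fintype N] [IsModularLattice N]
    (s : ℕ) (θ : Fin s → LatCon N)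
    (hmax : ∀ i, (θ i).IsMaximal)
    (hinj : Function.Injective θ)
    (hall : ∀ c : LatCon N, c.IsMaximal → ∃ i, c = θ i)
    (Ni : Fin s → Type) [∀ i, Lattice (Ni i)] [∀ i, BoundedOrder (Ni i)] [∀ i, Fintype (Ni i)]
    (T : ∀ i, N → Ni i)
    (hTsup : ∀ i a b, T i (a ⊔ b) = T i a ⊔ T i b)
    (hTinf : ∀ i a b, T i (a ⊓ b) = T i a ⊓ T i b)
    (hTsurj : ∀ i, Function.Surjective (T i))
    (hker : ∀ i a b, (θ i).r a b ↔ T i a = T i b)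
    (n : Fin s → ℕ)
    (hf : ∀ i, ∃ f : Ni i → Setoid (Fin (n i)), IsTightEmbedding f) :
    ∃ g : N → Setoid (Fin (Finset.univ.sum n)), IsTightEmbedding g :=
  statement_0_general s θ hmax hinj hall Ni T hTsup hTinf hTsurj hker n hf
end
end

section
/- If a finite modular lattice L admits a tight embedding into a partition lattice Part(n), then L is thin: L is 2-distributive and has no cover-preserving sublattice isomorphic to M_4. -/
open scoped Classical
noncomputable section

/-!
Part(n) is graded by `n` minus the number of blocks, and a tight embedding pulls this grading
back to `L`. An atom of an interval `[π, σ]` of `Part(n)` merges two blocks of `π` lying in one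
block of `σ`; if `σ` has `T` blocks fewer than `π`, there are at most `T(T+1)/2` such pairs. As `f`
is injective and cover-preserving, an interval of height `T` in `L` has at most `T(T+1)/2` atoms.
A cover-preserving `M₄` is an interval of height 2 with four atoms.

If 2-distributivity fails, induct on the total height of `b, c, d` above a common lower bound `u`:
a minimal failure `a, b, c, d` consists of four atoms above `u` spanning an interval of height 3,
no three of them on a line. Together with the three diagonal points of this quadrangle they are
seven atoms, while the bound allows six.
-/

open Finset

theorem Finset.card_offDiag_fiberwise_le {X Y : Type*} [Fintype X] [Fintype Y] [DecidableEq X]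
    [DecidableEq Y] {g : X → Y} (hg : Function.Surjective g) {T : ℕ}
    (hT : Fintype.card X ≤ Fintype.card Y + T) :
    #{p : X × X | p.1 ≠ p.2 ∧ g p.1 = g p.2} ≤ T * (T + 1) := by
  set fiber : Y → Finset X := fun c => {x | g x = c}
  have hfiber_pos : ∀ c, 1 ≤ #(fiber c) := fun c => by
    obtain ⟨x, rfl⟩ := hg c
    exact card_pos.2 ⟨x, by simp [fiber]⟩
  have hexcess : ∑ c, (#(fiber c) - 1) ≤ T := by
    have hsum : ∑ c, #(fiber c) = Fintype.card X :=
      (card_eq_sum_card_fiberwise fun x _ => mem_univ (g x)).symm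
    have : ∑ c, (#(fiber c) - 1) + Fintype.card Y = ∑ c, #(fiber c) := by
      rw [← card_univ, card_eq_sum_ones, ← sum_add_distrib]
      exact sum_congr rfl fun c _ => Nat.sub_add_cancel (hfiber_pos c)
    omega
  calc #{p : X × X | p.1 ≠ p.2 ∧ g p.1 = g p.2}
      ≤ #(univ.biUnion fun c => (fiber c).offDiag) := by
        refine card_le_card fun p hp => ?_
        simp only [mem_filter, mem_univ, true_and] at hp
        simp [fiber, hp.1, hp.2]
    _ ≤ ∑ c, #(fiber c).offDiag := card_biUnion_le
    _ ≤ ∑ c, (T + 1) * (#(fiber c) - 1) := by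
        refine sum_le_sum fun c _ => ?_
        have hcT : #(fiber c) - 1 ≤ T := (single_le_sum (f := fun c => #(fiber c) - 1)
          (fun _ _ => Nat.zero_le _) (mem_univ c)).trans hexcess
        obtain ⟨k, hk⟩ := Nat.exists_eq_add_of_le' (hfiber_pos c)
        rw [hk, Nat.add_sub_cancel] at hcT
        rw [offDiag_card, hk, ← Nat.mul_sub_one, Nat.add_sub_cancel]
        exact Nat.mul_le_mul_right k (by omega)
    _ = (T + 1) * ∑ c, (#(fiber c) - 1) := (mul_sum ..).symm
    _ ≤ T * (T + 1) := by rw [mul_comm]; exact Nat.mul_le_mul_right _ hexcess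

namespace Setoid

variable {α : Type*}

def mergeClasses (π : Setoid α) (x y : α) : Setoid α :=
  ker fun a => if π a y then Quotient.mk π x else Quotient.mk π a

def rank (π : Setoid α) : ℕ := Nat.card α - Nat.card (Quotient π)

variable {π ρ : Setoid α} {x y : α}

theorem mergeClasses_rel_iff {a b : α} :
    π.mergeClasses x y a b ↔
      (if π a y then Quotient.mk π x else Quotient.mk π a) =
        (if π b y then Quotient.mk π x else Quotient.mk π b) := Iff.rfl

theorem le_mergeClasses : π ≤ π.mergeClasses x y := by
  intro a b hab
  rw [mergeClasses_rel_iff]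
  by_cases ha : π a y
  · rw [if_pos ha, if_pos (π.trans' (π.symm' hab) ha)]
  · rw [if_neg ha, if_neg fun hb => ha (π.trans' hab hb), Quotient.sound hab]

theorem mergeClasses_rel_self : π.mergeClasses x y x y := by
  rw [mergeClasses_rel_iff, if_pos (π.refl' y)]
  split_ifs <;> rfl

theorem mergeClasses_le (hπρ : π ≤ ρ) (hxy : ρ x y) : π.mergeClasses x y ≤ ρ := by
  intro a b hab
  rw [mergeClasses_rel_iff] at hab
  split_ifs at hab with ha hb hb
  · exact ρ.trans' (hπρ ha) (ρ.symm' (hπρ hb))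
  · exact ρ.trans' (hπρ ha) (ρ.trans' (ρ.symm' hxy) (hπρ (Quotient.exact hab)))
  · exact ρ.trans' (hπρ (Quotient.exact hab)) (ρ.trans' hxy (ρ.symm' (hπρ hb)))
  · exact hπρ (Quotient.exact hab)

theorem card_quotient_mergeClasses [Finite α] (h : ¬ π x y) :
    Nat.card (Quotient (π.mergeClasses x y)) + 1 = Nat.card (Quotient π) := by
  have hrange : Set.range (fun a => if π a y then Quotient.mk π x else Quotient.mk π a) =
      {Quotient.mk π y}ᶜ := by
    ext q
    induction q using Quotient.inductionOn with | h b => ?_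
    simp only [Set.mem_range, Set.mem_compl_singleton_iff]
    constructor
    · rintro ⟨a, ha⟩
      split_ifs at ha with hay
      · rw [← ha]; exact fun hxy => h (Quotient.exact hxy)
      · rw [← ha]; exact fun hay' => hay (Quotient.exact hay')
    · exact fun hb => ⟨b, if_neg fun hby => hb (Quotient.sound hby)⟩
  have : Nonempty (Quotient π) := ⟨Quotient.mk π y⟩
  rw [mergeClasses, Nat.card_congr (quotientKerEquivRange _), hrange, Nat.card_coe_set_eq,
    Set.ncard_compl, Set.ncard_singleton, Nat.sub_add_cancel Nat.card_pos]

theorem card_quotient_le_card [Finite α] (π : Setoid α) : Nat.card (Quotient π) ≤ Nat.card α :=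
  Nat.card_le_card_of_surjective _ Quotient.mk_surjective

theorem exists_rel_not_rel_of_lt (h : π < ρ) : ∃ x y, ρ x y ∧ ¬ π x y := by
  simpa [le_def] using h.not_ge

theorem _root_.CovBy.eq_mergeClasses (h : π ⋖ ρ) (hxy : ρ x y) (hnxy : ¬ π x y) :
    π.mergeClasses x y = ρ :=
  (mergeClasses_le h.le hxy).eq_of_not_lt
    (h.2 (lt_of_le_not_ge le_mergeClasses fun hle => hnxy (hle mergeClasses_rel_self)))

theorem eq_of_covBy_of_rel {ρ' : Setoid α} (h : π ⋖ ρ) (h' : π ⋖ ρ') (hxy : ρ x y)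
    (hxy' : ρ' x y) (hnxy : ¬ π x y) : ρ = ρ' :=
  (h.eq_mergeClasses hxy hnxy).symm.trans (h'.eq_mergeClasses hxy' hnxy)

theorem rank_eq_add_one_of_covBy [Finite α] (h : π ⋖ ρ) : ρ.rank = π.rank + 1 := by
  obtain ⟨x, y, hxy, hnxy⟩ := exists_rel_not_rel_of_lt h.lt
  have hcard := card_quotient_mergeClasses hnxy
  rw [h.eq_mergeClasses hxy hnxy] at hcard
  have := card_quotient_le_card π
  unfold rank
  omega

theorem injective_sumElim_of_covBy {ι : Type*} {ρ : ι → Setoid α} (hρ : Function.Injective ρ)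
    (hcov : ∀ i, π ⋖ ρ i) {x y : ι → α} (hxy : ∀ i, ρ i (x i) (y i))
    (hnxy : ∀ i, ¬ π (x i) (y i)) :
    Function.Injective (Sum.elim (fun i => (Quotient.mk π (x i), Quotient.mk π (y i)))
      (fun i => (Quotient.mk π (y i), Quotient.mk π (x i)))) := by
  have hrel : ∀ j a b, π a (x j) → π (y j) b → ρ j a b := fun j a b ha hb =>
    (ρ j).trans' ((hcov j).le ha) ((ρ j).trans' (hxy j) ((hcov j).le hb))
  have hunique : ∀ i j, ρ j (x i) (y i) → i = j := fun i j h =>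
    hρ (eq_of_covBy_of_rel (hcov i) (hcov j) (hxy i) h (hnxy i))
  rintro (i | i) (j | j) h <;>
    simp only [Sum.elim_inl, Sum.elim_inr, Prod.mk.injEq, Quotient.eq] at h <;>
    obtain ⟨h₁, h₂⟩ := h
  · exact congrArg _ (hunique i j (hrel j _ _ h₁ (π.symm' h₂)))
  · obtain rfl := hunique i j ((ρ j).symm' (hrel j _ _ h₂ (π.symm' h₁)))
    exact absurd h₁ (hnxy i)
  · obtain rfl := hunique i j ((ρ j).symm' (hrel j _ _ h₁ (π.symm' h₂)))
    exact absurd h₂ (hnxy i)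
  · exact congrArg _ (hunique i j (hrel j _ _ h₂ (π.symm' h₁)))

theorem two_mul_card_le_of_covBy [Finite α] {σ : Setoid α} {T : ℕ}
    (hT : σ.rank ≤ π.rank + T) {ι : Type*} [Fintype ι] {ρ : ι → Setoid α}
    (hρ : Function.Injective ρ) (hcov : ∀ i, π ⋖ ρ i) (hρσ : ∀ i, ρ i ≤ σ) :
    2 * Fintype.card ι ≤ T * (T + 1) := by
  rcases isEmpty_or_nonempty ι with hι | ⟨⟨i₀⟩⟩
  · simp
  have hπσ : π ≤ σ := (hcov i₀).le.trans (hρσ i₀)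
  have := Fintype.ofFinite (Quotient π)
  have := Fintype.ofFinite (Quotient σ)
  choose x y hxy hnxy using fun i => exists_rel_not_rel_of_lt (hcov i).lt
  let g : Quotient π → Quotient σ := Quotient.map' id fun _ _ h => hπσ h
  calc 2 * Fintype.card ι = Fintype.card (ι ⊕ ι) := by rw [Fintype.card_sum, two_mul]
    _ ≤ #{p : Quotient π × Quotient π | p.1 ≠ p.2 ∧ g p.1 = g p.2} := by
        refine card_le_card_of_injOn _ (fun p _ => ?_)
          (injective_sumElim_of_covBy hρ hcov hxy hnxy).injOn
        rcases p with i | i <;>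
          simp only [g, Sum.elim_inl, Sum.elim_inr, coe_filter, mem_univ, true_and,
            Set.mem_ofPred_eq, ne_eq, Quotient.eq, Quotient.map'_mk'', id_eq]
        exacts [⟨hnxy i, hρσ i (hxy i)⟩,
          ⟨fun h => hnxy i (π.symm' h), σ.symm' (hρσ i (hxy i))⟩]
    _ ≤ T * (T + 1) := by
        refine card_offDiag_fiberwise_le ?_ ?_
        · rintro ⟨a⟩
          exact ⟨Quotient.mk π a, rfl⟩
        · have := card_quotient_le_card π
          simp only [rank, ← Nat.card_eq_fintype_card] at hT ⊢
          omega

end Setoid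

section Lattice

variable {L : Type*} [Lattice L] {u x z a b c d : L}

theorem CovBy.inf_eq_of_not_le (hz : u ⋖ z) (hux : u ≤ x) (hzx : ¬ z ≤ x) : z ⊓ x = u :=
  (hz.eq_or_eq (le_inf hz.le hux) inf_le_left).resolve_right fun h => hzx (h ▸ inf_le_right)

def TwoDistribAt (a b c d : L) : Prop :=
  a ⊓ (b ⊔ c ⊔ d) ≤ a ⊓ (b ⊔ c) ⊔ a ⊓ (b ⊔ d) ⊔ a ⊓ (c ⊔ d)

theorem twoDistribAt_rotate : TwoDistribAt a b c d ↔ TwoDistribAt a c d b := by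
  rw [TwoDistribAt, TwoDistribAt, sup_comm c b, sup_comm d b,
    show c ⊔ d ⊔ b = b ⊔ c ⊔ d by ac_rfl,
    show a ⊓ (c ⊔ d) ⊔ a ⊓ (b ⊔ c) ⊔ a ⊓ (b ⊔ d) = a ⊓ (b ⊔ c) ⊔ a ⊓ (b ⊔ d) ⊔ a ⊓ (c ⊔ d) by
      ac_rfl]

theorem twoDistribAt_inf_iff : TwoDistribAt (a ⊓ (b ⊔ c ⊔ d)) b c d ↔ TwoDistribAt a b c d := by
  have h : ∀ m ≤ b ⊔ c ⊔ d, a ⊓ (b ⊔ c ⊔ d) ⊓ m = a ⊓ m := fun m hm => by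
    rw [inf_assoc, inf_eq_right.2 hm]
  rw [TwoDistribAt, TwoDistribAt, h _ le_rfl, h _ le_sup_left,
    h _ (sup_le (le_sup_left.trans le_sup_left) le_sup_right),
    h _ (sup_le (le_sup_right.trans le_sup_left) le_sup_right)]

theorem sup_inf_sup_le_inf_sup (a b c d : L) :
    a ⊓ (b ⊔ c) ⊔ a ⊓ (b ⊔ d) ⊔ a ⊓ (c ⊔ d) ≤ a ⊓ (b ⊔ c ⊔ d) :=
  sup_le (sup_le (inf_le_inf_left a le_sup_left)
    (inf_le_inf_left a (sup_le_sup_right le_sup_left d)))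
    (inf_le_inf_left a (sup_le_sup_right le_sup_right d))

theorem twoDistrib_of_forall_twoDistribAt (h : ∀ a b c d : L, TwoDistribAt a b c d) :
    TwoDistrib L := fun a b c d => (h a b c d).antisymm (sup_inf_sup_le_inf_sup a b c d)

theorem twoDistribAt_of_sup_le (h : b ⊔ c ⊔ d ≤ a) : TwoDistribAt a b c d := by
  have hb : b ≤ a ⊓ (b ⊔ c) := le_inf ((le_sup_left.trans le_sup_left).trans h) le_sup_left
  have hc : c ≤ a ⊓ (b ⊔ c) := le_inf ((le_sup_right.trans le_sup_left).trans h) le_sup_right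
  have hd : d ≤ a ⊓ (c ⊔ d) := le_inf (le_sup_right.trans h) le_sup_right
  exact inf_le_right.trans (sup_le (sup_le (hb.trans (le_sup_left.trans le_sup_left))
    (hc.trans (le_sup_left.trans le_sup_left))) (hd.trans le_sup_right))

theorem not_le_sup_of_not_twoDistribAt (h : ¬ TwoDistribAt a b c d) :
    ¬ a ≤ b ⊔ c ∧ ¬ a ≤ b ⊔ d ∧ ¬ a ≤ c ⊔ d :=
  ⟨fun hle => h (inf_le_left.trans ((le_inf le_rfl hle).trans (le_sup_left.trans le_sup_left))),
    fun hle => h (inf_le_left.trans ((le_inf le_rfl hle).trans (le_sup_right.trans le_sup_left))),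
    fun hle => h (inf_le_left.trans ((le_inf le_rfl hle).trans le_sup_right))⟩

theorem sup_inf_sup_eq_of_covBy [IsModularLattice L] {w y : L} (huw : u ≤ w) (hx : u ⋖ x)
    (hxy : ¬ x ≤ w ⊔ y) : (w ⊔ x) ⊓ (w ⊔ y) = w := by
  rw [sup_inf_assoc_of_le x le_sup_left, hx.inf_eq_of_not_le (huw.trans le_sup_left) hxy,
    sup_eq_left.2 huw]

theorem sup_inf_ne_sup_inf [IsModularLattice L] {w y p : L} (hw : u ⋖ w) (hx : u ⋖ x)
    (he : u ⋖ (w ⊔ x) ⊓ p) (hxy : ¬ x ≤ w ⊔ y) (hwp : ¬ w ≤ p) (q : L) :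
    (w ⊔ x) ⊓ p ≠ (w ⊔ y) ⊓ q := by
  intro h
  have hle : (w ⊔ x) ⊓ p ≤ w :=
    (le_inf inf_le_left (h.le.trans inf_le_left)).trans (sup_inf_sup_eq_of_covBy hw.le hx hxy).le
  exact hwp ((hw.eq_or_eq he.le hle).resolve_left he.ne' ▸ inf_le_right)

-- With `R` the right-hand side of the law, modularity turns `h₁` into `a ⊓ (b ⊔ c ⊔ d) ≤ R ⊔ e`
-- (`h₂` bounds the last term), and modularity again removes `e` since `e ⊓ a ≤ a ⊓ (b ⊔ c)`.
theorem twoDistribAt_of_twoDistribAt_sup [IsModularLattice L] {e : L} (he : e ≤ b)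
    (h₁ : TwoDistribAt (a ⊔ e) b (c ⊔ e) (d ⊔ e)) (h₂ : TwoDistribAt a c d e) :
    TwoDistribAt a b c d := by
  set R := a ⊓ (b ⊔ c) ⊔ a ⊓ (b ⊔ d) ⊔ a ⊓ (c ⊔ d)
  have hbcR : a ⊓ (b ⊔ c) ≤ R := le_sup_left.trans le_sup_left
  have hbdR : a ⊓ (b ⊔ d) ≤ R := le_sup_right.trans le_sup_left
  have hcdR : a ⊓ (c ⊔ d) ≤ R := le_sup_right
  have hbc : b ⊔ (c ⊔ e) = b ⊔ c := by rw [sup_comm c, ← sup_assoc, sup_eq_left.2 he]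
  have hbd : b ⊔ (d ⊔ e) = b ⊔ d := by rw [sup_comm d, ← sup_assoc, sup_eq_left.2 he]
  have hcd : c ⊔ e ⊔ (d ⊔ e) = c ⊔ d ⊔ e := by rw [sup_sup_sup_comm, sup_idem]
  have hbcd : b ⊔ (c ⊔ e) ⊔ (d ⊔ e) = b ⊔ c ⊔ d := by
    rw [hbc, sup_comm d, ← sup_assoc, sup_eq_left.2 (he.trans le_sup_left)]
  rw [TwoDistribAt, hbcd, hbc, hbd, hcd] at h₁
  have hmod : ∀ m, e ≤ m → (a ⊔ e) ⊓ m ≤ e ⊔ a ⊓ m := fun m hm => by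
    rw [sup_comm]
    exact sup_inf_le_assoc_of_le a hm
  have hcdeR : a ⊓ (c ⊔ d ⊔ e) ≤ R := h₂.trans <| sup_le (sup_le hcdR
    ((inf_le_inf_left a (sup_le le_sup_right (he.trans le_sup_left))).trans hbcR))
    ((inf_le_inf_left a (sup_le le_sup_right (he.trans le_sup_left))).trans hbdR)
  have hle : a ⊓ (b ⊔ c ⊔ d) ≤ R ⊔ e := calc
    a ⊓ (b ⊔ c ⊔ d) ≤ (a ⊔ e) ⊓ (b ⊔ c ⊔ d) := inf_le_inf_right _ le_sup_left
    _ ≤ _ := h₁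
    _ ≤ e ⊔ R := sup_le (sup_le
      ((hmod _ (he.trans le_sup_left)).trans (sup_le_sup_left hbcR e))
      ((hmod _ (he.trans le_sup_left)).trans (sup_le_sup_left hbdR e)))
      ((hmod _ le_sup_right).trans (sup_le_sup_left hcdeR e))
    _ = R ⊔ e := sup_comm e R
  calc a ⊓ (b ⊔ c ⊔ d) = (R ⊔ e) ⊓ (a ⊓ (b ⊔ c ⊔ d)) := (inf_eq_right.2 hle).symm
    _ = R ⊔ e ⊓ (a ⊓ (b ⊔ c ⊔ d)) := sup_inf_assoc_of_le e (sup_inf_sup_le_inf_sup a b c d)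
    _ ≤ R := sup_le le_rfl
      ((le_inf (inf_le_right.trans inf_le_left) (inf_le_left.trans (he.trans le_sup_left))).trans
        hbcR)

end Lattice

section Graded

variable {L : Type*} [Lattice L] [GradeOrder ℕ L] {u x y : L}

theorem CovBy.grade_eq_add_one (h : x ⋖ y) : grade ℕ y = grade ℕ x + 1 :=
  (Nat.covBy_iff_add_one_eq.1 (h.grade ℕ)).symm

theorem eq_of_le_of_grade_le (h : x ≤ y) (hg : grade ℕ y ≤ grade ℕ x) : x = y :=
  h.eq_of_not_lt fun hlt => (grade_strictMono hlt).not_ge hg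

theorem covBy_of_le_of_grade_eq (h : x ≤ y) (hg : grade ℕ y = grade ℕ x + 1) : x ⋖ y :=
  ⟨h.lt_of_ne (by rintro rfl; omega), fun z hxz hzy => by
    have := grade_strictMono (𝕆 := ℕ) hxz
    have := grade_strictMono (𝕆 := ℕ) hzy
    omega⟩

variable [IsModularLattice L] {w z a b c d : L}

theorem grade_sup_add_grade_inf (x y : L) :
    grade ℕ (x ⊔ y) + grade ℕ (x ⊓ y) = grade ℕ x + grade ℕ y := by
  suffices ∀ k y, grade ℕ x ≤ grade ℕ (x ⊓ y) + k →
      grade ℕ (x ⊔ y) + grade ℕ (x ⊓ y) = grade ℕ x + grade ℕ y from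
    this _ y (Nat.le_add_left _ _)
  intro k
  induction k with
  | zero =>
    intro y hk
    have hxy : x ⊓ y = x := eq_of_le_of_grade_le inf_le_left (by omega)
    rw [hxy, sup_eq_right.2 (inf_eq_left.1 hxy), add_comm]
  | succ k ih =>
    intro y hk
    rcases (inf_le_left : x ⊓ y ≤ x).eq_or_lt with hxy | hlt
    · rw [hxy, sup_eq_right.2 (inf_eq_left.1 hxy), add_comm]
    obtain ⟨z, hcov, hzx⟩ := exists_covBy_le_of_lt hlt
    have hzy : z ⊓ y = x ⊓ y :=
      le_antisymm (inf_le_inf_right y hzx) (le_inf hcov.le inf_le_right)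
    have hy : y ⋖ z ⊔ y := covBy_sup_of_inf_covBy_left (hzy ▸ hcov)
    have hmeet : x ⊓ (z ⊔ y) = z := by
      rw [inf_comm, sup_inf_assoc_of_le y hzx, inf_comm y, sup_eq_left.2 hcov.le]
    have hjoin : x ⊔ (z ⊔ y) = x ⊔ y := by rw [← sup_assoc, sup_eq_left.2 hzx]
    have := ih (z ⊔ y) (by rw [hmeet, hcov.grade_eq_add_one]; omega)
    rw [hmeet, hjoin, hcov.grade_eq_add_one, hy.grade_eq_add_one] at this
    omega

theorem grade_sup_of_covBy_of_not_le (hux : u ≤ x) (hz : u ⋖ z) (hzx : ¬ z ≤ x) :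
    grade ℕ (x ⊔ z) = grade ℕ x + 1 := by
  have := grade_sup_add_grade_inf x z
  rw [inf_comm, hz.inf_eq_of_not_le hux hzx, hz.grade_eq_add_one] at this
  omega

theorem grade_sup_le_of_covBy (hx : u ⋖ x) (hy : u ⋖ y) :
    grade ℕ (x ⊔ y) ≤ grade ℕ u + 2 := by
  have hmod := grade_sup_add_grade_inf x y
  have := grade_mono (𝕆 := ℕ) (le_inf hx.le hy.le)
  rw [hx.grade_eq_add_one, hy.grade_eq_add_one] at hmod
  omega

variable (L) in
def TwoDistribBelow (N : ℕ) : Prop :=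
  ∀ u a b c d : L, u ≤ a → u ≤ b → u ≤ c → u ≤ d →
    grade ℕ b + grade ℕ c + grade ℕ d < 3 * grade ℕ u + N → TwoDistribAt a b c d

-- For `u < e < b`, both instances of the law needed by `twoDistribAt_of_twoDistribAt_sup` have
-- smaller height: `(a ⊔ e, b, c ⊔ e, d ⊔ e)` above `e` and `(a, c, d, e)` above `u`.
theorem covBy_of_not_twoDistribAt {N : ℕ} (ih : TwoDistribBelow L N)
    (hua : u ≤ a) (hub : u ≤ b) (huc : u ≤ c) (hud : u ≤ d)
    (hN : grade ℕ b + grade ℕ c + grade ℕ d < 3 * grade ℕ u + (N + 1))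
    (hfail : ¬ TwoDistribAt a b c d) : u ⋖ b := by
  refine ⟨hub.lt_of_ne ?_, fun e hue heb => hfail ?_⟩
  · rintro rfl
    exact hfail <| le_sup_of_le_right <| inf_le_inf_left a <|
      sup_le (sup_le (huc.trans le_sup_left) le_sup_left) le_sup_right
  have := grade_sup_add_grade_inf c e
  have := grade_sup_add_grade_inf d e
  have := grade_mono (𝕆 := ℕ) (le_inf huc hue.le)
  have := grade_mono (𝕆 := ℕ) (le_inf hud hue.le)
  have := grade_strictMono (𝕆 := ℕ) hue
  have := grade_strictMono (𝕆 := ℕ) heb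
  exact twoDistribAt_of_twoDistribAt_sup heb.le
    (ih e _ _ _ _ le_sup_right heb.le le_sup_right le_sup_right (by omega))
    (ih u a c d e hua huc hud hue.le (by omega))

theorem not_le_sup_of_grade_eq (hw : u ⋖ w) (hx : u ⋖ x) (hy : u ⋖ y)
    (h : grade ℕ (w ⊔ x ⊔ y) = grade ℕ u + 3) :
    ¬ w ≤ x ⊔ y ∧ ¬ x ≤ w ⊔ y ∧ ¬ y ≤ w ⊔ x := by
  refine ⟨fun hle => ?_, fun hle => ?_, fun hle => ?_⟩
  · have := grade_sup_le_of_covBy hx hy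
    rw [sup_assoc, sup_eq_right.2 hle] at h
    omega
  · have := grade_sup_le_of_covBy hw hy
    rw [sup_right_comm, sup_eq_left.2 hle] at h
    omega
  · have := grade_sup_le_of_covBy hw hx
    rw [sup_eq_left.2 hle] at h
    omega

theorem covBy_of_not_twoDistribAt_of_covBy (hb : u ⋖ b) (hc : u ⋖ c) (hd : u ⋖ d)
    (hV : grade ℕ (b ⊔ c ⊔ d) = grade ℕ u + 3) (hua : u ≤ a) (haV : a < b ⊔ c ⊔ d)
    (hfail : ¬ TwoDistribAt a b c d) : u ⋖ a := by
  set R := a ⊓ (b ⊔ c) ⊔ a ⊓ (b ⊔ d) ⊔ a ⊓ (c ⊔ d)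
  have hRa : R < a := (sup_le (sup_le inf_le_left inf_le_left) inf_le_left).lt_of_ne
    fun h => hfail (inf_le_left.trans h.ge)
  obtain ⟨ha_bc, ha_bd, ha_cd⟩ := not_le_sup_of_not_twoDistribAt hfail
  obtain ⟨hb_cd, hc_bd, hd_bc⟩ := not_le_sup_of_grade_eq hb hc hd hV
  have hua' : u < a := hua.lt_of_ne (by rintro rfl; exact ha_bc (hb.le.trans le_sup_left))
  have := grade_strictMono (𝕆 := ℕ) haV
  have := grade_strictMono (𝕆 := ℕ) hua'
  have := grade_strictMono (𝕆 := ℕ) hRa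
  refine covBy_of_le_of_grade_eq hua (by_contra fun hne => ?_)
  have hga : grade ℕ a = grade ℕ u + 2 := by omega
  -- The line `a` meets each side of the triangle `b, c, d` in a point, which can only be `R`.
  have hmeet : ∀ ℓ, ℓ ≤ b ⊔ c ⊔ d → grade ℕ ℓ = grade ℕ u + 2 → ¬ a ≤ ℓ → a ⊓ ℓ ≤ R →
      a ⊓ ℓ = R ∧ grade ℕ R = grade ℕ u + 1 := by
    intro ℓ hℓ hgℓ haℓ hℓR
    have := grade_strictMono (𝕆 := ℕ)
      (le_sup_right.lt_of_ne fun h => haℓ (h ▸ le_sup_left) : ℓ < a ⊔ ℓ)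
    have := grade_mono (𝕆 := ℕ) (sup_le haV.le hℓ)
    have := grade_sup_add_grade_inf a ℓ
    have hR : a ⊓ ℓ = R := eq_of_le_of_grade_le hℓR (by omega)
    exact ⟨hR, by rw [← hR]; omega⟩
  have hgb := hb.grade_eq_add_one
  have hgc := hc.grade_eq_add_one
  have hc_b : ¬ c ≤ b := fun h => hc_bd (h.trans le_sup_left)
  have hd_b : ¬ d ≤ b := fun h => hd_bc (h.trans le_sup_left)
  have hd_c : ¬ d ≤ c := fun h => hd_bc (h.trans le_sup_right)
  obtain ⟨hbcR, hgR⟩ := hmeet _ le_sup_left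
    (by rw [grade_sup_of_covBy_of_not_le hb.le hc hc_b]; omega) ha_bc
    (le_sup_left.trans le_sup_left)
  obtain ⟨hbdR, -⟩ := hmeet _ (sup_le (le_sup_left.trans le_sup_left) le_sup_right)
    (by rw [grade_sup_of_covBy_of_not_le hb.le hd hd_b]; omega) ha_bd
    (le_sup_right.trans le_sup_left)
  obtain ⟨hcdR, -⟩ := hmeet _ (sup_le (le_sup_right.trans le_sup_left) le_sup_right)
    (by rw [grade_sup_of_covBy_of_not_le hc.le hd hd_c]; omega) ha_cd le_sup_right
  -- Two sides through `b` meet only in `b`, so `R = b`, which is not on the third side.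
  have hRb : R ≤ b := (le_inf (hbcR ▸ inf_le_right) (hbdR ▸ inf_le_right)).trans
    (sup_inf_sup_eq_of_covBy hb.le hc hc_bd).le
  exact hb_cd ((eq_of_le_of_grade_le hRb (by omega)) ▸ hcdR ▸ inf_le_right)

theorem covBy_sup_inf_sup (hw : u ⋖ w) (hx : u ⋖ x) (hy : u ⋖ y) (hz : u ⋖ z) (hxw : ¬ x ≤ w)
    (hzy : ¬ z ≤ y) (h : grade ℕ (w ⊔ x ⊔ (y ⊔ z)) = grade ℕ u + 3) :
    u ⋖ (w ⊔ x) ⊓ (y ⊔ z) := by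
  have := grade_sup_add_grade_inf (w ⊔ x) (y ⊔ z)
  rw [grade_sup_of_covBy_of_not_le hw.le hx hxw, grade_sup_of_covBy_of_not_le hy.le hz hzy,
    hw.grade_eq_add_one, hy.grade_eq_add_one, h] at this
  exact covBy_of_le_of_grade_eq (le_inf (hw.le.trans le_sup_left) (hy.le.trans le_sup_left))
    (by omega)

/-- Four points of the projective plane `[u, V]`, no three of them collinear. -/
structure IsQuadrangle (u V w x y z : L) : Prop where
  covBy_w : u ⋖ w
  covBy_x : u ⋖ x
  covBy_y : u ⋖ y
  covBy_z : u ⋖ z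
  grade_eq : grade ℕ V = grade ℕ u + 3
  sup_wxy : w ⊔ x ⊔ y = V
  sup_wxz : w ⊔ x ⊔ z = V
  sup_wyz : w ⊔ y ⊔ z = V
  sup_xyz : x ⊔ y ⊔ z = V

theorem IsQuadrangle.covBy_diagonals {V : L} (hq : IsQuadrangle u V w x y z) :
    u ⋖ (w ⊔ x) ⊓ (y ⊔ z) ∧ u ⋖ (w ⊔ y) ⊓ (x ⊔ z) ∧ u ⋖ (w ⊔ z) ⊓ (x ⊔ y) := by
  obtain ⟨hw, hx, hy, hz, hV, hwxy, hwxz, hwyz, hxyz⟩ := hq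
  obtain ⟨-, hx_wy, hy_wx⟩ := not_le_sup_of_grade_eq hw hx hy (hwxy ▸ hV)
  obtain ⟨-, -, hz_wx⟩ := not_le_sup_of_grade_eq hw hx hz (hwxz ▸ hV)
  obtain ⟨-, -, hz_wy⟩ := not_le_sup_of_grade_eq hw hy hz (hwyz ▸ hV)
  have hgrade : grade ℕ (w ⊔ x ⊔ y ⊔ z) = grade ℕ u + 3 := by
    rw [hwxy, sup_eq_left.2 (hxyz ▸ le_sup_right), hV]
  refine ⟨covBy_sup_inf_sup hw hx hy hz (fun h => hx_wy (h.trans le_sup_left))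
      (fun h => hz_wy (h.trans le_sup_right)) ?_,
    covBy_sup_inf_sup hw hy hx hz (fun h => hy_wx (h.trans le_sup_left))
      (fun h => hz_wx (h.trans le_sup_right)) ?_,
    covBy_sup_inf_sup hw hz hx hy (fun h => hz_wx (h.trans le_sup_left))
      (fun h => hy_wx (h.trans le_sup_right)) ?_⟩
  all_goals rw [← hgrade]; ac_rfl

theorem IsQuadrangle.exists_seven_atoms {V : L} (hq : IsQuadrangle u V w x y z) :
    ∃ s : Finset L, s.card = 7 ∧ ∀ p ∈ s, u ⋖ p ∧ p ≤ V := by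
  obtain ⟨he₁, he₂, he₃⟩ := hq.covBy_diagonals
  obtain ⟨hw, hx, hy, hz, hV, hwxy, hwxz, hwyz, hxyz⟩ := hq
  obtain ⟨hw_xy, hx_wy, hy_wx⟩ := not_le_sup_of_grade_eq hw hx hy (hwxy ▸ hV)
  obtain ⟨hw_xz, hx_wz, hz_wx⟩ := not_le_sup_of_grade_eq hw hx hz (hwxz ▸ hV)
  obtain ⟨hw_yz, hy_wz, hz_wy⟩ := not_le_sup_of_grade_eq hw hy hz (hwyz ▸ hV)
  obtain ⟨hx_yz, hy_xz, hz_xy⟩ := not_le_sup_of_grade_eq hx hy hz (hxyz ▸ hV)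
  have hwV : w ≤ V := hwxy ▸ le_sup_left.trans le_sup_left
  have hxV : x ≤ V := hwxy ▸ le_sup_right.trans le_sup_left
  have hyV : y ≤ V := hwxy ▸ le_sup_right
  have hzV : z ≤ V := hxyz ▸ le_sup_right
  have off : ∀ {p m e : L}, e ≤ m → ¬ p ≤ m → p ≠ e := fun he hp h => hp (h ▸ he)
  refine ⟨{w, x, y, z, (w ⊔ x) ⊓ (y ⊔ z), (w ⊔ y) ⊓ (x ⊔ z), (w ⊔ z) ⊓ (x ⊔ y)}, ?_, ?_⟩
  · rw [Finset.card_insert_of_notMem, Finset.card_insert_of_notMem, Finset.card_insert_of_notMem,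
      Finset.card_insert_of_notMem, Finset.card_insert_of_notMem, Finset.card_pair]
    all_goals try simp only [Finset.mem_insert, Finset.mem_singleton, not_or]
    exacts [sup_inf_ne_sup_inf hw hy he₂ hy_wz hw_xz _,
      ⟨sup_inf_ne_sup_inf hw hx he₁ hx_wy hw_yz _, sup_inf_ne_sup_inf hw hx he₁ hx_wz hw_yz _⟩,
      ⟨off inf_le_left hz_wx, off inf_le_left hz_wy, off inf_le_right hz_xy⟩,
      ⟨off le_sup_right hy_wz, off inf_le_left hy_wx, off inf_le_right hy_xz,
        off inf_le_left hy_wz⟩,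
      ⟨off le_sup_right hx_wy, off le_sup_right hx_wz, off inf_le_right hx_yz,
        off inf_le_left hx_wy, off inf_le_left hx_wz⟩,
      ⟨off le_sup_left hw_xy, off le_sup_right hw_xy, off le_sup_right hw_xz,
        off inf_le_right hw_yz, off inf_le_right hw_xz, off inf_le_right hw_xy⟩]
  · simp only [Finset.mem_insert, Finset.mem_singleton]
    rintro p (rfl | rfl | rfl | rfl | rfl | rfl | rfl)
    exacts [⟨hw, hwV⟩, ⟨hx, hxV⟩, ⟨hy, hyV⟩, ⟨hz, hzV⟩, ⟨he₁, inf_le_left.trans (sup_le hwV hxV)⟩,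
      ⟨he₂, inf_le_left.trans (sup_le hwV hyV)⟩, ⟨he₃, inf_le_left.trans (sup_le hwV hzV)⟩]

theorem IsQuadrangle.of_not_le_sup (ha : u ⋖ a) (hb : u ⋖ b) (hc : u ⋖ c) (hd : u ⋖ d)
    (hV : grade ℕ (b ⊔ c ⊔ d) = grade ℕ u + 3) (haV : a ≤ b ⊔ c ⊔ d) (ha_bc : ¬ a ≤ b ⊔ c)
    (ha_bd : ¬ a ≤ b ⊔ d) (ha_cd : ¬ a ≤ c ⊔ d) : IsQuadrangle u (b ⊔ c ⊔ d) a b c d := by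
  obtain ⟨-, hc_bd, hd_bc⟩ := not_le_sup_of_grade_eq hb hc hd hV
  have hspan : ∀ p q, u ⋖ p → u ⋖ q → ¬ q ≤ p → p ⊔ q ≤ b ⊔ c ⊔ d → ¬ a ≤ p ⊔ q →
      p ⊔ q ⊔ a = b ⊔ c ⊔ d := fun p q hp hq hqp hpq hapq => by
    have := grade_sup_of_covBy_of_not_le hp.le hq hqp
    refine eq_of_le_of_grade_le (sup_le hpq haV) ?_
    rw [grade_sup_of_covBy_of_not_le (hp.le.trans le_sup_left) ha hapq, this,
      hp.grade_eq_add_one]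
    omega
  refine ⟨ha, hb, hc, hd, hV, ?_, ?_, ?_, rfl⟩
  · rw [← hspan b c hb hc (fun h => hc_bd (h.trans le_sup_left)) le_sup_left ha_bc]
    ac_rfl
  · rw [← hspan b d hb hd (fun h => hd_bc (h.trans le_sup_left))
      (sup_le (le_sup_left.trans le_sup_left) le_sup_right) ha_bd]
    ac_rfl
  · rw [← hspan c d hc hd (fun h => hd_bc (h.trans le_sup_right))
      (sup_le (le_sup_right.trans le_sup_left) le_sup_right) ha_cd]
    ac_rfl

theorem isQuadrangle_of_not_twoDistribAt {N : ℕ} (ih : TwoDistribBelow L N)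
    (hua : u ≤ a) (hub : u ≤ b) (huc : u ≤ c) (hud : u ≤ d)
    (hN : grade ℕ b + grade ℕ c + grade ℕ d < 3 * grade ℕ u + (N + 1))
    (ha : a ≤ b ⊔ c ⊔ d) (hfail : ¬ TwoDistribAt a b c d) :
    IsQuadrangle u (b ⊔ c ⊔ d) a b c d := by
  have hb : u ⋖ b := covBy_of_not_twoDistribAt ih hua hub huc hud hN hfail
  have hc : u ⋖ c := covBy_of_not_twoDistribAt ih hua huc hud hub (by omega)
    (twoDistribAt_rotate.not.1 hfail)
  have hd : u ⋖ d := covBy_of_not_twoDistribAt ih hua hud hub huc (by omega)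
    ((twoDistribAt_rotate.trans twoDistribAt_rotate).not.1 hfail)
  obtain ⟨ha_bc, ha_bd, ha_cd⟩ := not_le_sup_of_not_twoDistribAt hfail
  have hc_b : ¬ c ≤ b := fun h => ha_bd (ha.trans (sup_le_sup_right (sup_le le_rfl h) d))
  have hV : grade ℕ (b ⊔ c ⊔ d) = grade ℕ u + 3 := by
    rw [grade_sup_of_covBy_of_not_le (hb.le.trans le_sup_left) hd
      fun h => ha_bc (ha.trans (sup_le le_rfl h)), grade_sup_of_covBy_of_not_le hb.le hc hc_b,
      hb.grade_eq_add_one]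
  have haV : a < b ⊔ c ⊔ d := ha.lt_of_ne fun h => hfail (twoDistribAt_of_sup_le h.ge)
  exact .of_not_le_sup (covBy_of_not_twoDistribAt_of_covBy hb hc hd hV hua haV hfail)
    hb hc hd hV ha ha_bc ha_bd ha_cd

theorem twoDistribBelow_of_forall_not_isQuadrangle
    (h : ∀ u V w x y z : L, ¬ IsQuadrangle u V w x y z) : ∀ N, TwoDistribBelow L N
  | 0 => fun u _ b c d _ hub huc hud hN => by
    have := grade_mono (𝕆 := ℕ) hub
    have := grade_mono (𝕆 := ℕ) huc
    have := grade_mono (𝕆 := ℕ) hud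
    omega
  | N + 1 => fun u a b c d hua hub huc hud hN => by
    rw [← twoDistribAt_inf_iff]
    by_contra hfail
    exact h _ _ _ _ _ _ <| isQuadrangle_of_not_twoDistribAt
      (twoDistribBelow_of_forall_not_isQuadrangle h N)
      (le_inf hua (hub.trans (le_sup_left.trans le_sup_left))) hub huc hud hN inf_le_right hfail

theorem twoDistrib_of_forall_not_isQuadrangle
    (h : ∀ u V w x y z : L, ¬ IsQuadrangle u V w x y z) : TwoDistrib L :=
  twoDistrib_of_forall_twoDistribAt fun a b c d =>
    twoDistribBelow_of_forall_not_isQuadrangle h (grade ℕ b + grade ℕ c + grade ℕ d + 1)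
      (a ⊓ b ⊓ c ⊓ d) a b c d (inf_le_left.trans (inf_le_left.trans inf_le_left))
      (inf_le_left.trans (inf_le_left.trans inf_le_right)) (inf_le_left.trans inf_le_right)
      inf_le_right (by omega)

end Graded

namespace IsTightEmbedding

variable {L : Type*} [Lattice L] [BoundedOrder L] {n : ℕ} {f : L → Setoid (Fin n)}

theorem monotone (hf : IsTightEmbedding f) : Monotone f := fun x y h =>
  calc f x = f x ⊓ f y := by rw [← hf.2.1, inf_eq_left.2 h]
    _ ≤ f y := inf_le_right

variable [Fintype L]

abbrev gradeOrder (hf : IsTightEmbedding f) : GradeOrder ℕ L :=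
  letI := Fintype.toLocallyFiniteOrder (α := L)
  { grade := fun x => (f x).rank
    grade_strictMono := (strictMono_iff_forall_covBy _).2 fun _ _ h => by
      rw [Setoid.rank_eq_add_one_of_covBy (hf.2.2.2 _ _ h)]
      exact Nat.lt_succ_self _
    covBy_grade := fun _ _ h => by
      rw [Setoid.rank_eq_add_one_of_covBy (hf.2.2.2 _ _ h)]
      exact Order.covBy_add_one _ }

theorem injective (hf : IsTightEmbedding f) : Function.Injective f := by
  let := hf.gradeOrder
  have hinf : ∀ x y, f x = f y → x ⊓ y = x := fun x y h =>
    eq_of_le_of_grade_le inf_le_left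
      (show (f x).rank ≤ (f (x ⊓ y)).rank by rw [hf.2.1, h, inf_idem])
  exact fun x y h => (hinf x y h).symm.trans (inf_comm x y ▸ hinf y x h.symm)

theorem two_mul_card_le (hf : IsTightEmbedding f) {u V : L} {T : ℕ}
    (hT : (f V).rank ≤ (f u).rank + T) {s : Finset L} (hs : ∀ p ∈ s, u ⋖ p ∧ p ≤ V) :
    2 * s.card ≤ T * (T + 1) := by
  simpa using Setoid.two_mul_card_le_of_covBy hT (ρ := fun p : s => f p)
    (hf.injective.comp Subtype.val_injective) (fun p => hf.2.2.2 _ _ (hs p p.2).1)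
    (fun p => hf.monotone (hs p p.2).2)

end IsTightEmbedding

theorem statement_1 {L : Type} [Lattice L] [BoundedOrder L] [Fintype L] [IsModularLattice L]
    (n : ℕ) (f : L → Setoid (Fin n)) (hf : IsTightEmbedding f) :
    TwoDistrib L ∧ ¬ HasCoverPreservingM4 L := by
  let := hf.gradeOrder
  refine ⟨twoDistrib_of_forall_not_isQuadrangle fun u V w x y z hq => ?_, ?_⟩
  · obtain ⟨s, hs7, hs⟩ := hq.exists_seven_atoms
    have := hf.two_mul_card_le hq.grade_eq.le hs
    omega
  · rintro ⟨b, t, a, ha, hb, ht, -, -⟩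
    have hT : grade ℕ t ≤ grade ℕ b + 2 := by
      rw [(ht 0).grade_eq_add_one, (hb 0).grade_eq_add_one]
    have := hf.two_mul_card_le (s := Finset.univ.image a) hT (by simp [hb, (ht _).le])
    rw [Finset.card_image_of_injective _ ha] at this
    simp at this

end
end

section
/- A partial linear space is a UMP if and only if it is a tree of QIMPes. -/
open scoped Classical
noncomputable section

/-!
A cycle of a tree of PLSes lies in a single piece. In a QIMP piece, the quasi-isolated point of a
cycle line cannot be a junction, which lies on two cycle lines; so it is the midpoint of every
cycle through that line.

Conversely, in a UMP take a minimal nonempty set `Γ` of lines meeting the remaining lines in at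
most one point. If some `m ∈ Γ` had no point that is quasi-isolated in `Γ`, minimality would give,
from every point `x ∈ m`, a walk in `Γ \ {m}` back to another point of `m`; a shortest one closes
up with `m` to a cycle whose midpoint on `m` is not `x`. Starting at `x` gives a midpoint `z ≠ x`,
and starting at `z` a midpoint other than `z`, against UMP. So `Γ` is a QIMP, and it attaches to a
tree of QIMPs for the remaining lines, obtained by induction.
-/

open Finset

section Generic

variable {α : Type*}

theorem Finset.eq_of_card_eq_three {m : Finset α} (hm : m.card = 3) {u v q r : α}
    (hu : u ∈ m) (hv : v ∈ m) (hq : q ∈ m) (hr : r ∈ m) (huv : u ≠ v)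
    (hqu : q ≠ u) (hqv : q ≠ v) (hru : r ≠ u) (hrv : r ≠ v) : q = r := by
  by_contra hqr
  have hsub : {u, v, q, r} ⊆ m := by
    simp only [insert_subset_iff, singleton_subset_iff]
    exact ⟨hu, hv, hq, hr⟩
  have := card_le_card hsub
  rw [card_insert_of_notMem (by simp [huv, hqu.symm, hru.symm]),
    card_insert_of_notMem (by simp [hqv.symm, hrv.symm]),
    card_insert_of_notMem (by simp [hqr]), card_singleton] at this
  omega

theorem Finset.exists_mem_ne_ne {m : Finset α} (hm : 2 < m.card) (u v : α) :
    ∃ z ∈ m, z ≠ u ∧ z ≠ v := by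
  have : 0 < ((m.erase u).erase v).card := by
    have h₁ := pred_card_le_card_erase (s := m) (a := u)
    have h₂ := pred_card_le_card_erase (s := m.erase u) (a := v)
    omega
  obtain ⟨z, hz⟩ := card_pos.1 this
  simp only [mem_erase] at hz
  exact ⟨z, hz.2.2, hz.2.1, hz.1⟩

theorem Set.injOn_Iio_of_lt {β : Type*} {f : ℕ → β} {n : ℕ}
    (h : ∀ i k, i < k → k < n → f i ≠ f k) : Set.InjOn f (Set.Iio n) := by
  intro i hi k hk hik
  by_contra hne
  rcases Nat.lt_or_gt_of_ne hne with hlt | hlt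
  exacts [h i k hlt hk hik, h k i hlt hi hik.symm]

theorem exists_mod_succ_transition {n a b : ℕ} {P : ℕ → Prop} (ha : a < n) (hPa : P a)
    (hb : b < n) (hPb : ¬ P b) : ∃ i < n, P i ∧ ¬ P ((i + 1) % n) := by
  by_contra! h
  have hP : ∀ d, P ((a + d) % n) := by
    intro d
    induction d with
    | zero => rwa [add_zero, Nat.mod_eq_of_lt ha]
    | succ d ih => simpa [Nat.mod_add_mod, add_assoc] using h _ (Nat.mod_lt _ (by omega)) ih
  have := hP (n + b - a)
  rw [show a + (n + b - a) = b + n by omega, Nat.add_mod_right, Nat.mod_eq_of_lt hb] at this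
  exact hPb this

end Generic

namespace PLS

variable {α : Type*}

theorem eq_of_mem_of_mem (S : PLS α) {ℓ m : Finset α} (hℓ : ℓ ∈ S.Λ) (hm : m ∈ S.Λ)
    (hne : ℓ ≠ m) {u v : α} (huℓ : u ∈ ℓ) (hum : u ∈ m) (hvℓ : v ∈ ℓ) (hvm : v ∈ m) : u = v := by
  by_contra h
  have := S.line_inter ℓ hℓ m hm hne
  have : 1 < (ℓ ∩ m).card :=
    one_lt_card.2 ⟨u, mem_inter.2 ⟨huℓ, hum⟩, v, mem_inter.2 ⟨hvℓ, hvm⟩, h⟩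
  omega

end PLS

namespace PLSPath

variable {α : Type*} {S : PLS α}

theorem p_injOn (P : PLSPath α) (hP : P.In S.Λ) : Set.InjOn P.p (Set.Iio P.n) := by
  refine Set.injOn_Iio_of_lt fun i k hik hk heq => ?_
  have hk' : k - 1 + 1 = k := by omega
  have hpk : P.p i ∈ P.line (k - 1) := by
    rw [heq, ← hk']
    exact P.p_mem_right _ (by omega)
  rcases (Nat.le_sub_one_of_lt hik).eq_or_lt with h | h
  · exact P.p_ne i (by omega) (by rw [heq, h, hk'])
  · -- `p i` lies on the lines `i` and `k - 1`, which forces `k - 1 = i + 1`; then the two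
    -- distinct lines `i`, `i + 1` share both `p i` and `p (i + 1)`.
    have hki := (P.lines_inter_iff i (k - 1) h (by omega)).1
      ⟨_, mem_inter.2 ⟨P.p_mem_left i (by omega), hpk⟩⟩
    rw [hki] at hpk
    exact P.p_ne i (by omega) (S.eq_of_mem_of_mem (hP i (by omega)) (hP (i + 1) (by omega))
      (P.lines_ne i (i + 1) (by omega) (by omega)) (P.p_mem_left i (by omega)) hpk
      (P.p_mem_right i (by omega)) (P.p_mem_left (i + 1) (by omega)))

end PLSPath

namespace PLSCycle

variable {α : Type*} {S : PLS α} {Λ : Finset (Finset α)} {C : PLSCycle α} {i : ℕ}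

theorem cline_of_lt (h : i + 1 < C.n) : C.cline i = C.line i := if_pos h

theorem cline_of_not_lt (h : ¬ i + 1 < C.n) : C.cline i = C.closing := if_neg h

theorem closing_ne_line (h : i + 1 < C.n) : C.closing ≠ C.line i := by
  obtain ⟨q, hq, hq'⟩ := C.closing_new
  exact fun heq => hq' i h (heq ▸ hq)

theorem in_iff : C.In Λ ↔ ∀ i < C.n, C.cline i ∈ Λ := by
  refine ⟨fun hC i hi => ?_, fun h => ⟨fun i hi => ?_, ?_⟩⟩
  · unfold cline
    split_ifs with h
    exacts [hC.1 i h, hC.2]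
  · simpa [cline_of_lt hi] using h i (by omega)
  · have := C.two_le
    simpa [cline_of_not_lt (C := C) (i := C.n - 1) (by omega)] using h (C.n - 1) (by omega)

theorem In.cline_mem (hC : C.In Λ) (hi : i < C.n) : C.cline i ∈ Λ := in_iff.1 hC i hi

theorem In.mono {Λ' : Finset (Finset α)} (hC : C.In Λ) (h : Λ ⊆ Λ') : C.In Λ' :=
  ⟨fun i hi => h (hC.1 i hi), h hC.2⟩

theorem cline_injOn (C : PLSCycle α) : Set.InjOn C.cline (Set.Iio C.n) := by
  refine Set.injOn_Iio_of_lt fun i k hik hk => ?_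
  rw [cline_of_lt (by omega)]
  by_cases hk' : k + 1 < C.n
  · rw [cline_of_lt hk']
    exact C.lines_ne i k hik hk'
  · rw [cline_of_not_lt hk']
    exact (closing_ne_line (by omega)).symm

theorem p_mem_cline (hi : i < C.n) : C.p i ∈ C.cline i := by
  unfold cline
  split_ifs with h
  · exact C.p_mem_left i h
  · rw [show i = C.n - 1 by omega]
    exact C.closing_last

theorem p_succ_mem_cline (hi : i < C.n) : C.p ((i + 1) % C.n) ∈ C.cline i := by
  unfold cline
  split_ifs with h
  · rw [Nat.mod_eq_of_lt h]
    exact C.p_mem_right i h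
  · rw [show i + 1 = C.n by omega, Nat.mod_self]
    exact C.closing_first

theorem succ_mod_ne (hi : i < C.n) : (i + 1) % C.n ≠ i := by
  have := C.two_le
  by_cases h : i + 1 < C.n
  · rw [Nat.mod_eq_of_lt h]
    omega
  · rw [show i + 1 = C.n by omega, Nat.mod_self]
    omega

theorem exists_cline_ne_p_mem (hi : i < C.n) : ∃ k < C.n, k ≠ i ∧ C.p i ∈ C.cline k := by
  have := C.two_le
  rcases Nat.eq_zero_or_pos i with rfl | hi0
  · refine ⟨C.n - 1, by omega, by omega, ?_⟩
    rw [cline_of_not_lt (by omega)]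
    exact C.closing_first
  · refine ⟨i - 1, by omega, by omega, ?_⟩
    rw [cline_of_lt (by omega)]
    simpa [Nat.sub_add_cancel hi0] using C.p_mem_right (i - 1) (by omega)

theorem p_injOn (hC : C.In S.Λ) : Set.InjOn C.p (Set.Iio C.n) :=
  C.toPLSPath.p_injOn hC.1

/-- Each junction of a `C`-line also lies on a second `C`-line. -/
theorem IsMidpoint.eq_of_quasiIsolated (hC : C.In S.Λ) (hi : i < C.n) {q r : α}
    (hq : C.IsMidpoint i q) (hr : r ∈ C.cline i)
    (hr' : ∀ ℓ ∈ S.Λ, ℓ ≠ C.cline i → r ∉ ℓ) : q = r := by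
  have hsucc : (i + 1) % C.n < C.n := Nat.mod_lt _ (by omega)
  have hother : ∀ k < C.n, k ≠ i → r ∉ C.cline k := fun k hk hki =>
    hr' _ (hC.cline_mem hk) (C.cline_injOn.ne hk hi hki)
  obtain ⟨k, hk, hki, hpk⟩ := exists_cline_ne_p_mem hi
  refine Finset.eq_of_card_eq_three (S.line_card _ (hC.cline_mem hi)) (p_mem_cline hi)
    (p_succ_mem_cline hi) hq.1 hr ?_ hq.2.1 hq.2.2 ?_ ?_
  · exact C.p_injOn hC |>.ne hi hsucc (succ_mod_ne hi).symm
  · exact fun h => hother k hk hki (h ▸ hpk)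
  · exact fun h => hother _ hsucc (succ_mod_ne hi) (h ▸ p_mem_cline hsucc)

end PLSCycle

namespace PLS.IsTreeOf

variable {α : Type*} {S : PLS α} {t : ℕ} {F : ℕ → PLS α}

theorem exists_piece (htree : S.IsTreeOf t F) {ℓ : Finset α} (hℓ : ℓ ∈ S.Λ) :
    ∃ a < t, ℓ ∈ (F a).Λ := by
  rw [htree.2.1] at hℓ
  simpa using hℓ

theorem piece_unique (htree : S.IsTreeOf t F) {ℓ : Finset α} {a b : ℕ} (ha : a < t) (hb : b < t)
    (hℓa : ℓ ∈ (F a).Λ) (hℓb : ℓ ∈ (F b).Λ) : a = b := by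
  by_contra hne
  wlog hab : a < b generalizing a b
  · exact this hb ha hℓb hℓa (Ne.symm hne) (by omega)
  obtain ⟨x, hx⟩ := htree.2.2 b (by omega) hb
  have hsub : ℓ ⊆ {x} := by
    rw [← hx]
    intro y hy
    exact mem_inter.2 ⟨(F b).line_sub ℓ hℓb hy,
      mem_biUnion.2 ⟨a, mem_range.2 hab, (F a).line_sub ℓ hℓa hy⟩⟩
  have := card_le_card hsub
  rw [(F a).line_card ℓ hℓa, card_singleton] at this
  omega

theorem eq_of_mem_earlier (htree : S.IsTreeOf t F) {j k k' : ℕ} (hjt : j < t) (hk : k < j)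
    (hk' : k' < j) {y y' : α} (hy : y ∈ (F j).J) (hy' : y' ∈ (F j).J) (hyk : y ∈ (F k).J)
    (hyk' : y' ∈ (F k').J) : y = y' := by
  obtain ⟨x, hx⟩ := htree.2.2 j (by omega) hjt
  have mem_x : ∀ z ∈ (F j).J, ∀ l < j, z ∈ (F l).J → z = x := fun z hz l hl hzl => by
    have : z ∈ (F j).J ∩ (range j).biUnion (fun i => (F i).J) :=
      mem_inter.2 ⟨hz, mem_biUnion.2 ⟨l, mem_range.2 hl, hzl⟩⟩
    simpa [hx] using this
  rw [mem_x y hy k hk hyk, mem_x y' hy' k' hk' hyk']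

/-- Let `j` be the largest piece containing a `C`-line. If some `C`-line is outside piece `j`,
the cycle enters and leaves piece `j` at two distinct junctions, both of which also lie in
earlier pieces; but piece `j` meets the earlier pieces in a single point. -/
theorem exists_piece_cycle (htree : S.IsTreeOf t F) {C : PLSCycle α} (hC : C.In S.Λ) :
    ∃ a < t, C.In (F a).Λ := by
  have hpiece : ∀ i < C.n, ∃ a < t, C.cline i ∈ (F a).Λ := fun i hi =>
    htree.exists_piece (hC.cline_mem hi)
  choose! π hπt hπ using hpiece
  have hn : 0 < C.n := by have := C.two_le; omega
  obtain ⟨i₀, hi₀, hmax⟩ := exists_max_image (range C.n) π ⟨0, mem_range.2 hn⟩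
  rw [mem_range] at hi₀
  have hmax : ∀ i < C.n, π i ≤ π i₀ := fun i hi => hmax i (mem_range.2 hi)
  suffices hall : ∀ i < C.n, π i = π i₀ from
    ⟨π i₀, hπt i₀ hi₀, PLSCycle.in_iff.2 fun i hi => hall i hi ▸ hπ i hi⟩
  by_contra! ⟨i₁, hi₁, hne⟩
  have hsucc : ∀ i, (i + 1) % C.n < C.n := fun i => Nat.mod_lt _ hn
  have hJ : ∀ i < C.n, ∀ {y}, y ∈ C.cline i → y ∈ (F (π i)).J := fun i hi y hy =>
    (F (π i)).line_sub _ (hπ i hi) hy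
  have hlt : ∀ i < C.n, π i ≠ π i₀ → π i < π i₀ := fun i hi h => lt_of_le_of_ne (hmax i hi) h
  obtain ⟨a, ha, hπa, hπa'⟩ := exists_mod_succ_transition (P := (π · = π i₀)) hi₀ rfl hi₁ hne
  obtain ⟨b, hb, hπb, hπb'⟩ := exists_mod_succ_transition (P := (π · ≠ π i₀)) hi₁ hne hi₀
    (not_not.2 rfl)
  rw [not_not] at hπb'
  have hjunction : C.p ((a + 1) % C.n) = C.p ((b + 1) % C.n) :=
    htree.eq_of_mem_earlier (hπt i₀ hi₀) (hlt _ (hsucc a) hπa') (hlt b hb hπb)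
      (hπa ▸ hJ a ha (PLSCycle.p_succ_mem_cline ha))
      (hπb' ▸ hJ _ (hsucc b) (PLSCycle.p_mem_cline (hsucc b)))
      (hJ _ (hsucc a) (PLSCycle.p_mem_cline (hsucc a))) (hJ b hb (PLSCycle.p_succ_mem_cline hb))
  have hsucc_eq := (C.p_injOn hC) (hsucc a) (hsucc b) hjunction
  have hab : a = b := (Nat.ModEq.add_right_cancel' 1 hsucc_eq).eq_of_lt_of_lt ha hb
  exact hπb (hab ▸ hπa)

theorem isUMP (htree : S.IsTreeOf t F) (hQ : ∀ i < t, (F i).IsQIMP) : S.IsUMP := by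
  intro C C' hC hC' i i' hi hi' hℓ q q' hq hq'
  obtain ⟨a, ha, hCa⟩ := htree.exists_piece_cycle hC
  obtain ⟨a', ha', hCa'⟩ := htree.exists_piece_cycle hC'
  obtain rfl : a = a' :=
    htree.piece_unique ha ha' (hCa.cline_mem hi) (hℓ ▸ hCa'.cline_mem hi')
  obtain ⟨r, hr, hr'⟩ := hQ a ha _ (hCa.cline_mem hi)
  rw [hq.eq_of_quasiIsolated hCa hi hr hr',
    hq'.eq_of_quasiIsolated hCa' hi' (hℓ ▸ hr) (hℓ ▸ hr')]

end PLS.IsTreeOf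

section Walks

variable {α : Type*}

structure IsWalk (Δ : Finset (Finset α)) (k : ℕ) (f : ℕ → Finset α) (w : α) : Prop where
  pos : 0 < k
  mem : ∀ i < k, f i ∈ Δ
  start : w ∈ f 0
  chain : ∀ i, i + 1 < k → (f i ∩ f (i + 1)).Nonempty

variable {Δ : Finset (Finset α)} {k : ℕ} {f : ℕ → Finset α} {w : α}

namespace IsWalk

theorem take (hf : IsWalk Δ k f w) {j : ℕ} (hj0 : 0 < j) (hj : j ≤ k) : IsWalk Δ j f w :=
  ⟨hj0, fun i hi => hf.mem i (by omega), hf.start, fun i hi => hf.chain i (by omega)⟩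

theorem drop (hf : IsWalk Δ k f w) {i : ℕ} (hi : i < k) {w' : α} (hw' : w' ∈ f i) :
    IsWalk Δ (k - i) (fun r => f (i + r)) w' :=
  ⟨by omega, fun r hr => hf.mem _ (by omega), hw', fun r hr => hf.chain (i + r) (by omega)⟩

theorem snoc (hf : IsWalk Δ k f w) {ℓ : Finset α} (hℓ : ℓ ∈ Δ) {y : α} (hyf : y ∈ f (k - 1))
    (hyℓ : y ∈ ℓ) : IsWalk Δ (k + 1) (Function.update f k ℓ) w := by
  have hk := hf.pos
  refine ⟨by omega, fun i hi => ?_, by simpa [Function.update_of_ne hk.ne] using hf.start,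
    fun i hi => ?_⟩
  · rcases (Nat.lt_succ_iff.1 hi).eq_or_lt with rfl | hi
    · simpa using hℓ
    · simpa [Function.update_of_ne hi.ne] using hf.mem i hi
  · rcases (Nat.lt_succ_iff.1 hi).eq_or_lt with hi | hi
    · rw [Function.update_of_ne (by omega), hi, Function.update_self,
        show i = k - 1 by omega]
      exact ⟨y, mem_inter.2 ⟨hyf, hyℓ⟩⟩
    · simpa [Function.update_of_ne (show i ≠ k by omega), Function.update_of_ne hi.ne]
        using hf.chain i hi

/-- Drop the lines strictly between `f i` and `f j`. -/
theorem shortcut (hf : IsWalk Δ k f w) {i j : ℕ} (hij : i < j) (hj : j < k)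
    (hint : (f i ∩ f j).Nonempty) :
    IsWalk Δ (k - (j - i - 1)) (fun r => if r ≤ i then f r else f (r + (j - i - 1))) w := by
  refine ⟨by omega, fun r hr => ?_, by simpa using hf.start, fun r hr => ?_⟩
  · split_ifs
    exacts [hf.mem r (by omega), hf.mem _ (by omega)]
  · by_cases h₁ : r + 1 ≤ i
    · simpa [show r ≤ i by omega, h₁] using hf.chain r (by omega)
    by_cases h₂ : r ≤ i
    · simpa [h₂, h₁, show r = i by omega, show i + 1 + (j - i - 1) = j by omega] using hint
    · simpa [h₂, h₁, show r + 1 + (j - i - 1) = r + (j - i - 1) + 1 by omega] using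
        hf.chain (r + (j - i - 1)) (by omega)

end IsWalk

def IsWalkTo (Δ : Finset (Finset α)) (m : Finset α) (w : α) (k : ℕ) (f : ℕ → Finset α) : Prop :=
  IsWalk Δ k f w ∧ ∃ v ∈ m, v ≠ w ∧ v ∈ f (k - 1)

end Walks

section ShortestWalk

variable {α : Type*} {Δ : Finset (Finset α)} {m : Finset α} {w : α} {k : ℕ} {f : ℕ → Finset α}

theorem exists_path_of_isWalk {v : α} (hf : IsWalk Δ k f w) (hv : v ∈ f (k - 1)) (hwv : w ≠ v)
    (hne : ∀ i, i + 1 < k → f i ≠ f (i + 1))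
    (hinter : ∀ i j, i < j → j < k → (f i ∩ f j).Nonempty → j = i + 1)
    (hw : ∀ i, 0 < i → i < k → w ∉ f i) (hv' : ∀ i, i + 1 < k → v ∉ f i) :
    ∃ P : PLSPath α, P.n = k + 1 ∧ P.line = f ∧ P.p 0 = w ∧ P.p k = v := by
  have hk := hf.pos
  have : Nonempty α := ⟨w⟩
  choose! q hq using hf.chain
  let p : ℕ → α := fun i => if i = 0 then w else if i < k then q (i - 1) else v
  have hp_left : ∀ i < k, p i ∈ f i := fun i hi => by
    rcases Nat.eq_zero_or_pos i with rfl | hi0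
    · simpa [p] using hf.start
    · simpa [p, hi0.ne', hi, Nat.sub_add_cancel hi0] using (mem_inter.1 (hq (i - 1) (by omega))).2
  have hp_right : ∀ i < k, p (i + 1) ∈ f i := fun i hi => by
    by_cases h : i + 1 < k
    · simpa [p, h] using (mem_inter.1 (hq i h)).1
    · obtain rfl : i = k - 1 := by omega
      simpa [p, Nat.sub_add_cancel hk, hk.ne'] using hv
  let P : PLSPath α :=
    { n := k + 1
      two_le := by omega
      p := p
      line := f
      p_mem_left := fun i hi => hp_left i (by omega)
      p_mem_right := fun i hi => hp_right i (by omega)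
      p_ne := fun i hi heq => ?_
      lines_ne := fun i j hij hj heq => ?_
      lines_inter_iff := fun i j hij hj =>
        ⟨hinter i j hij (by omega), fun h => h ▸ hf.chain i (by omega)⟩ }
  refine ⟨P, rfl, rfl, by simp [P, p], by simp [P, p]; omega⟩
  · rcases Nat.eq_zero_or_pos i with rfl | hi0
    · rw [zero_add] at heq
      by_cases h1 : 1 < k
      · exact hw 1 one_pos h1 (by simpa [p, ← heq] using hp_left 1 h1)
      · exact hwv (by simpa [p, h1] using heq)
    have hprev : p i ∈ f (i - 1) := by
      simpa [Nat.sub_add_cancel hi0] using hp_right (i - 1) (by omega)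
    by_cases h : i + 1 < k
    · have := hinter (i - 1) (i + 1) (by omega) h ⟨p i, mem_inter.2 ⟨hprev, heq ▸ hp_left _ h⟩⟩
      omega
    · exact hv' (i - 1) (by omega) (by simpa [p, h, heq] using hprev)
  · have := hinter i j hij (by omega)
      ⟨p i, mem_inter.2 ⟨hp_left i (by omega), heq ▸ hp_left i (by omega)⟩⟩
    exact hne i (by omega) (this ▸ heq)

def IsShortestWalkTo (Δ : Finset (Finset α)) (m : Finset α) (w : α) (k : ℕ) (f : ℕ → Finset α) :
    Prop :=
  IsWalkTo Δ m w k f ∧ ∀ k' f', IsWalkTo Δ m w k' f' → k ≤ k'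

theorem exists_isShortestWalkTo (h : ∃ k f, IsWalkTo Δ m w k f) :
    ∃ k f, IsShortestWalkTo Δ m w k f := by
  obtain ⟨f, hf⟩ := Nat.find_spec h
  exact ⟨_, f, hf, fun k' f' hf' => Nat.find_min' h ⟨f', hf'⟩⟩

namespace IsShortestWalkTo

theorem eq_succ_of_inter_nonempty (hf : IsShortestWalkTo Δ m w k f) {i j : ℕ} (hij : i < j)
    (hj : j < k) (hint : (f i ∩ f j).Nonempty) : j = i + 1 := by
  obtain ⟨⟨hwalk, v, hvm, hvw, hvf⟩, hmin⟩ := hf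
  have := hmin _ _ ⟨hwalk.shortcut hij hj hint, v, hvm, hvw, by
    simpa [show ¬ k - (j - i - 1) - 1 ≤ i by omega,
      show k - (j - i - 1) - 1 + (j - i - 1) = k - 1 by omega] using hvf⟩
  omega

theorem notMem_of_pos (hf : IsShortestWalkTo Δ m w k f) {i : ℕ} (hi0 : 0 < i) (hi : i < k) :
    w ∉ f i := fun hwi => by
  obtain ⟨⟨hwalk, v, hvm, hvw, hvf⟩, hmin⟩ := hf
  have := hmin _ _ ⟨hwalk.drop hi hwi, v, hvm, hvw, by
    simpa [show i + (k - i - 1) = k - 1 by omega] using hvf⟩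
  omega

theorem eq_pred_of_mem (hf : IsShortestWalkTo Δ m w k f) {i : ℕ} (hi : i < k) {y : α}
    (hym : y ∈ m) (hyw : y ≠ w) (hyf : y ∈ f i) : i = k - 1 := by
  have := hf.2 (i + 1) f ⟨hf.1.1.take (by omega) (by omega), y, hym, hyw, by simpa using hyf⟩
  omega

theorem ne_succ (hf : IsShortestWalkTo Δ m w k f) {i : ℕ} (hi : i + 1 < k) : f i ≠ f (i + 1) := by
  intro heq
  obtain ⟨v, hvm, hvw, hvf⟩ := hf.1.2
  by_cases h : i + 2 < k
  · have := hf.eq_succ_of_inter_nonempty (by omega) h (heq ▸ hf.1.1.chain (i + 1) h)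
    omega
  · have := hf.eq_pred_of_mem (i := i) (by omega) hvm hvw
      (by rw [heq, show i + 1 = k - 1 by omega]; exact hvf)
    omega

/-- The cycle is closed by `m`; its midpoint on `m` is the point of `m` other than `w` and the
endpoint of the walk. -/
theorem exists_cycle {S : PLS α} (hΔ : Δ ⊆ S.Λ) (hm : m ∈ S.Λ) (hmΔ : m ∉ Δ) (hw : w ∈ m)
    (hf : IsShortestWalkTo Δ m w k f) :
    ∃ C : PLSCycle α, C.In S.Λ ∧ ∃ i < C.n, C.cline i = m ∧ ∃ z, C.IsMidpoint i z ∧ z ≠ w := by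
  obtain ⟨⟨hwalk, v, hvm, hvw, hvf⟩, -⟩ := id hf
  have hk := hwalk.pos
  obtain ⟨P, hPn, hPline, hP0, hPk⟩ := exists_path_of_isWalk hwalk hvf hvw.symm
    (fun i => hf.ne_succ) (fun i j => hf.eq_succ_of_inter_nonempty) (fun i => hf.notMem_of_pos)
    (fun i hi hvi => by have := hf.eq_pred_of_mem (by omega) hvm hvw hvi; omega)
  obtain ⟨z, hzm, hzw, hzv⟩ := exists_mem_ne_ne (by rw [S.line_card m hm]; norm_num) w v
  have hline_mem : ∀ i, i + 1 < P.n → P.line i ∈ S.Λ := fun i hi => by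
    rw [hPline]
    exact hΔ (hwalk.mem i (by omega))
  let C : PLSCycle α :=
    { toPLSPath := P
      closing := m
      closing_last := by rwa [hPn, Nat.add_sub_cancel, hPk]
      closing_first := by rwa [hP0]
      closing_new := ⟨z, hzm, fun i hi hzi => by
        rw [hPline] at hzi
        obtain rfl := hf.eq_pred_of_mem (by omega) hzm hzw hzi
        exact hzv (S.eq_of_mem_of_mem hm (hΔ (hwalk.mem _ (by omega)))
          (fun h => hmΔ (h ▸ hwalk.mem _ (by omega))) hzm hzi hvm hvf)⟩ }
  have hCn : C.n - 1 = k := by simp [C, hPn]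
  refine ⟨C, ⟨hline_mem, hm⟩, C.n - 1, by simp [C, hPn], PLSCycle.cline_of_not_lt (by omega),
    z, ⟨by rwa [PLSCycle.cline_of_not_lt (by omega)], ?_, ?_⟩, hzw⟩
  · simpa [hCn, C, hPk] using hzv
  · simpa [show C.n - 1 + 1 = C.n by omega, C, hP0] using hzw

end IsShortestWalkTo

end ShortestWalk

namespace PLS

variable {α : Type*}

def boundary (S : PLS α) (Γ : Finset (Finset α)) : Finset α :=
  Γ.biUnion id ∩ (S.Λ \ Γ).biUnion id

def IsPendant (S : PLS α) (Γ : Finset (Finset α)) : Prop :=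
  Γ ⊆ S.Λ ∧ Γ.Nonempty ∧ (S.boundary Γ).card ≤ 1

def sub (S : PLS α) (J : Finset α) (Γ : Finset (Finset α)) (hΓ : Γ ⊆ S.Λ)
    (hJ : ∀ ℓ ∈ Γ, ℓ ⊆ J) : PLS α where
  J := J
  Λ := Γ
  line_sub := hJ
  line_card ℓ hℓ := S.line_card ℓ (hΓ hℓ)
  line_inter ℓ hℓ ℓ' hℓ' := S.line_inter ℓ (hΓ hℓ) ℓ' (hΓ hℓ')

def deleteLines (S : PLS α) (Γ : Finset (Finset α)) : PLS α :=
  S.sub (S.J \ Γ.biUnion id ∪ S.boundary Γ) (S.Λ \ Γ) sdiff_subset fun ℓ hℓ y hy => by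
    by_cases hyΓ : y ∈ Γ.biUnion id
    · exact mem_union_right _ (mem_inter.2 ⟨hyΓ, mem_biUnion.2 ⟨ℓ, hℓ, hy⟩⟩)
    · exact mem_union_left _ (mem_sdiff.2 ⟨S.line_sub ℓ (mem_sdiff.1 hℓ).1 hy, hyΓ⟩)

def IsTreeOfQIMPs (S : PLS α) : Prop :=
  ∃ (t : ℕ) (F : ℕ → PLS α), 1 ≤ t ∧ S.IsTreeOf t F ∧ ∀ i, i < t → (F i).IsQIMP

variable {S : PLS α} {Γ K : Finset (Finset α)}

theorem isPendant_Λ (h : S.Λ.Nonempty) : S.IsPendant S.Λ :=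
  ⟨subset_rfl, h, by simp [boundary]⟩

theorem boundary_subset (hKΓ : K ⊆ Γ) :
    S.boundary K ⊆ K.biUnion id ∩ (Γ \ K).biUnion id ∪ S.boundary Γ := by
  intro y hy
  obtain ⟨hyK, hyR⟩ := mem_inter.1 hy
  obtain ⟨ℓ, hℓ, hyℓ⟩ := mem_biUnion.1 hyR
  rw [mem_sdiff] at hℓ
  by_cases hℓΓ : ℓ ∈ Γ
  · exact mem_union_left _ (mem_inter.2 ⟨hyK, mem_biUnion.2 ⟨ℓ, mem_sdiff.2 ⟨hℓΓ, hℓ.2⟩, hyℓ⟩⟩)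
  · exact mem_union_right _ (mem_inter.2 ⟨biUnion_subset_biUnion_of_subset_left _ hKΓ hyK,
      mem_biUnion.2 ⟨ℓ, mem_sdiff.2 ⟨hℓ.1, hℓΓ⟩, hyℓ⟩⟩)

/-- The boundaries of `K` and `Γ \ K` lie in `{x} ∪ S.boundary Γ`, and the point of
`S.boundary Γ` other than `x`, if any, misses one of them. -/
theorem card_boundary_le_one_or (hΓ : (S.boundary Γ).card ≤ 1) (hKΓ : K ⊆ Γ) {x : α}
    (hx : K.biUnion id ∩ (Γ \ K).biUnion id ⊆ {x}) :
    (S.boundary K).card ≤ 1 ∨ (S.boundary (Γ \ K)).card ≤ 1 := by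
  have : Nonempty α := ⟨x⟩
  have hK := boundary_subset (S := S) hKΓ
  have hK' := boundary_subset (S := S) (sdiff_subset : Γ \ K ⊆ Γ)
  rw [Finset.sdiff_sdiff_eq_self hKΓ, inter_comm] at hK'
  obtain ⟨y, hy⟩ := card_le_one_iff_subset_singleton.1 hΓ
  simp only [card_le_one_iff_subset_singleton]
  by_cases hyK : y ∈ K.biUnion id
  · refine Or.inr ⟨x, fun z hz => ?_⟩
    rcases mem_union.1 (hK' hz) with hz' | hz'
    · exact hx hz'
    · obtain rfl := mem_singleton.1 (hy hz')
      exact hx (mem_inter.2 ⟨hyK, (mem_inter.1 hz).1⟩)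
  · refine Or.inl ⟨x, fun z hz => ?_⟩
    rcases mem_union.1 (hK hz) with hz' | hz'
    · exact hx hz'
    · obtain rfl := mem_singleton.1 (hy hz')
      exact absurd (mem_inter.1 hz).1 hyK

/-- If no such walk existed, the lines reachable from `x` without using `m` would split off a
smaller pendant set, on their own or through their complement in `Γ`. -/
theorem exists_isWalkTo_of_minimal (hΓ : Minimal S.IsPendant Γ) {m : Finset α} (hm : m ∈ Γ)
    {x : α} (hx : x ∈ m) (hxΓ : ∃ ℓ ∈ Γ, ℓ ≠ m ∧ x ∈ ℓ) :
    ∃ k f, IsWalkTo (Γ.erase m) m x k f := by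
  by_contra! hno
  let K := (Γ.erase m).filter fun ℓ => ∃ k f, IsWalk (Γ.erase m) k f x ∧ f (k - 1) = ℓ
  obtain ⟨ℓ, hℓΓ, hℓm, hxℓ⟩ := hxΓ
  have hℓK : ℓ ∈ K := mem_filter.2 ⟨mem_erase.2 ⟨hℓm, hℓΓ⟩, 1, fun _ => ℓ,
    ⟨one_pos, fun _ _ => mem_erase.2 ⟨hℓm, hℓΓ⟩, hxℓ, fun _ h => absurd h (by omega)⟩, rfl⟩
  have hmK : m ∉ K := fun h => by simp [K] at h
  have hKΓ : K ⊆ Γ := (filter_subset _ _).trans (erase_subset m Γ)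
  have hsep : K.biUnion id ∩ (Γ \ K).biUnion id ⊆ {x} := by
    intro y hy
    simp only [mem_inter, mem_biUnion, id, mem_sdiff] at hy
    obtain ⟨⟨ℓ₁, hℓ₁, hy₁⟩, ℓ₂, ⟨hℓ₂Γ, hℓ₂K⟩, hy₂⟩ := hy
    obtain ⟨-, k, f, hf, rfl⟩ := mem_filter.1 hℓ₁
    by_cases h₂ : ℓ₂ = m
    · subst h₂
      by_contra hyx
      exact hno k f ⟨hf, y, hy₂, by simpa using hyx, hy₁⟩
    · have hℓ₂ : ℓ₂ ∈ Γ.erase m := mem_erase.2 ⟨h₂, hℓ₂Γ⟩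
      exact absurd (mem_filter.2 ⟨hℓ₂, k + 1, _, hf.snoc hℓ₂ hy₁ hy₂, by simp⟩) hℓ₂K
  obtain ⟨hΓΛ, -, hbd⟩ := hΓ.prop
  rcases card_boundary_le_one_or hbd hKΓ hsep with h | h
  · have := hΓ.eq_of_le ⟨hKΓ.trans hΓΛ, ⟨ℓ, hℓK⟩, h⟩ hKΓ
    exact hmK (this ▸ hm)
  · have := hΓ.eq_of_le ⟨sdiff_subset.trans hΓΛ, ⟨m, mem_sdiff.2 ⟨hm, hmK⟩⟩, h⟩ sdiff_subset
    have hℓ : ℓ ∈ Γ \ K := by rwa [this]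
    exact (mem_sdiff.1 hℓ).2 hℓK

theorem IsUMP.mono {T : PLS α} (hS : S.IsUMP) (h : T.Λ ⊆ S.Λ) : T.IsUMP :=
  fun C C' hC hC' => hS C C' (hC.mono h) (hC'.mono h)

theorem IsUMP.isQIMP_of_minimal (hS : S.IsUMP) (hΓ : Minimal S.IsPendant Γ) :
    ∀ ℓ ∈ Γ, ∃ q ∈ ℓ, ∀ ℓ' ∈ Γ, ℓ' ≠ ℓ → q ∉ ℓ' := by
  by_contra! ⟨m, hmΓ, hm⟩
  have hmΛ := hΓ.prop.1 hmΓ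
  have hcycle : ∀ x ∈ m, ∃ C : PLSCycle α, C.In S.Λ ∧
      ∃ i < C.n, C.cline i = m ∧ ∃ z, C.IsMidpoint i z ∧ z ≠ x := by
    intro x hx
    obtain ⟨k, f, hf⟩ := exists_isShortestWalkTo (exists_isWalkTo_of_minimal hΓ hmΓ hx (hm x hx))
    exact hf.exists_cycle ((erase_subset m Γ).trans hΓ.prop.1) hmΛ (notMem_erase m Γ) hx
  obtain ⟨x, hx⟩ := card_pos.1 (by rw [S.line_card m hmΛ]; norm_num)
  obtain ⟨C, hC, i, hi, hCi, z, hz, hzx⟩ := hcycle x hx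
  obtain ⟨C', hC', i', hi', hCi', z', hz', hz'z⟩ := hcycle z (hCi ▸ hz.1)
  exact hz'z (hS C' C hC' hC i' i hi' hi (hCi'.trans hCi.symm) z' z hz' hz)

end PLS

namespace PLS

variable {α : Type*} {S : PLS α} {Γ : Finset (Finset α)}

theorem deleteLines_J_union (hΓ : Γ ⊆ S.Λ) : (S.deleteLines Γ).J ∪ Γ.biUnion id = S.J := by
  have hsub : Γ.biUnion id ⊆ S.J := biUnion_subset.2 fun ℓ hℓ => S.line_sub ℓ (hΓ hℓ)
  ext y
  simp only [deleteLines, sub, boundary, mem_union, mem_sdiff, mem_inter]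
  constructor
  · rintro ((⟨hy, -⟩ | ⟨hy, -⟩) | hy) <;> first | exact hy | exact hsub hy
  · intro hy
    by_cases hyΓ : y ∈ Γ.biUnion id
    · exact Or.inr hyΓ
    · exact Or.inl (Or.inl ⟨hy, hyΓ⟩)

theorem deleteLines_J_inter : (S.deleteLines Γ).J ∩ Γ.biUnion id = S.boundary Γ := by
  ext y
  simp only [deleteLines, sub, boundary, mem_union, mem_sdiff, mem_inter]
  tauto

theorem IsQIMP.of_union {T T' U : PLS α} (hT : T.IsQIMP) (hT' : T'.IsQIMP)
    (hU : U.Λ = T.Λ ∪ T'.Λ) (hdisj : Disjoint T.J T'.J) : U.IsQIMP := by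
  have key : ∀ {A B : PLS α}, A.IsQIMP → Disjoint A.J B.J →
      ∀ ℓ ∈ A.Λ, ∃ q ∈ ℓ, ∀ ℓ' ∈ A.Λ ∪ B.Λ, ℓ' ≠ ℓ → q ∉ ℓ' := by
    intro A B hA hAB ℓ hℓ
    obtain ⟨q, hq, hq'⟩ := hA ℓ hℓ
    refine ⟨q, hq, fun ℓ' hℓ' hne hqℓ' => ?_⟩
    rcases mem_union.1 hℓ' with h | h
    · exact hq' ℓ' h hne hqℓ'
    · exact disjoint_left.1 hAB (A.line_sub ℓ hℓ hq) (B.line_sub ℓ' h hqℓ')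
  intro ℓ hℓ
  rw [hU] at hℓ ⊢
  rcases mem_union.1 hℓ with h | h
  · exact key hT hdisj ℓ h
  · simpa [union_comm] using key hT' hdisj.symm ℓ h

section UpdatePiece

variable {β : Type*} [DecidableEq β] (g : PLS α → Finset β) (F : ℕ → PLS α) (P : PLS α)

theorem biUnion_range_update_of_le {i k : ℕ} (h : i ≤ k) :
    (range i).biUnion (fun j => g (Function.update F k P j)) =
      (range i).biUnion (fun j => g (F j)) :=
  biUnion_congr rfl fun j hj => by rw [Function.update_of_ne (by simp at hj; omega)]

theorem biUnion_range_update_last (t : ℕ) :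
    (range (t + 1)).biUnion (fun j => g (Function.update F t P j)) =
      (range t).biUnion (fun j => g (F j)) ∪ g P := by
  rw [range_add_one, biUnion_insert, union_comm, Function.update_self,
    biUnion_range_update_of_le g F P le_rfl]

theorem biUnion_range_update_zero {A : Finset β} (hP : g P = g (F 0) ∪ A) {i : ℕ} (hi : 0 < i) :
    (range i).biUnion (fun j => g (Function.update F 0 P j)) =
      (range i).biUnion (fun j => g (F j)) ∪ A := by
  have hrest : ((range i).erase 0).biUnion (fun j => g (Function.update F 0 P j)) =
      ((range i).erase 0).biUnion (fun j => g (F j)) :=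
    biUnion_congr rfl fun j hj => by rw [Function.update_of_ne (ne_of_mem_erase hj)]
  rw [← insert_erase (mem_range.2 hi), biUnion_insert, biUnion_insert, Function.update_self, hP,
    hrest]
  ac_rfl

end UpdatePiece

namespace IsTreeOfQIMPs

variable {S₀ P : PLS α}

theorem of_Λ_eq_empty (h : S.Λ = ∅) : S.IsTreeOfQIMPs :=
  ⟨1, fun _ => S, le_rfl, ⟨by simp, by simp, fun i h0 h1 => by omega⟩,
    fun _ _ ℓ hℓ => by simp [h] at hℓ⟩

theorem attach_at_point (h₀ : S₀.IsTreeOfQIMPs) (hP : P.IsQIMP) (hJ : S.J = S₀.J ∪ P.J)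
    (hΛ : S.Λ = S₀.Λ ∪ P.Λ) {x : α} (hx : S₀.J ∩ P.J = {x}) : S.IsTreeOfQIMPs := by
  obtain ⟨t, F, -, ⟨hJ₀, hΛ₀, hsep⟩, hQ⟩ := h₀
  refine ⟨t + 1, Function.update F t P, by omega, ⟨?_, ?_, fun i hi0 hi => ?_⟩, fun i hi => ?_⟩
  · rw [biUnion_range_update_last (·.J), ← hJ₀, hJ]
  · rw [biUnion_range_update_last (·.Λ), ← hΛ₀, hΛ]
  · rcases (Nat.lt_succ_iff.1 hi).eq_or_lt with rfl | hi
    · rw [Function.update_self, biUnion_range_update_of_le (·.J) F P le_rfl, ← hJ₀, inter_comm, hx]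
      exact ⟨x, rfl⟩
    · rw [Function.update_of_ne hi.ne, biUnion_range_update_of_le (·.J) F P hi.le]
      exact hsep i hi0 hi
  · rcases (Nat.lt_succ_iff.1 hi).eq_or_lt with rfl | hi
    · simpa using hP
    · simpa [Function.update_of_ne hi.ne] using hQ i hi

/-- The new QIMP is merged into the first piece. -/
theorem attach_disjoint (h₀ : S₀.IsTreeOfQIMPs) (hP : P.IsQIMP) (hJ : S.J = S₀.J ∪ P.J)
    (hΛ : S.Λ = S₀.Λ ∪ P.Λ) (hdisj : Disjoint S₀.J P.J) : S.IsTreeOfQIMPs := by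
  obtain ⟨t, F, ht, ⟨hJ₀, hΛ₀, hsep⟩, hQ⟩ := h₀
  have hFJ : ∀ i < t, (F i).J ⊆ S₀.J := fun i hi =>
    hJ₀ ▸ subset_biUnion_of_mem (fun j => (F j).J) (mem_range.2 hi)
  have hF0Λ : (F 0).Λ ⊆ S.Λ := hΛ ▸ (hΛ₀ ▸ subset_biUnion_of_mem (fun j => (F j).Λ)
    (mem_range.2 ht)).trans subset_union_left
  let Q := S.sub ((F 0).J ∪ P.J) ((F 0).Λ ∪ P.Λ) (union_subset hF0Λ (hΛ ▸ subset_union_right))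
    fun ℓ hℓ => by
      rcases mem_union.1 hℓ with h | h
      exacts [((F 0).line_sub ℓ h).trans subset_union_left,
        (P.line_sub ℓ h).trans subset_union_right]
  refine ⟨t, Function.update F 0 Q, ht, ⟨?_, ?_, fun i hi0 hi => ?_⟩, fun i hi => ?_⟩
  · rw [biUnion_range_update_zero (·.J) F Q (A := P.J) rfl ht, ← hJ₀, hJ]
  · rw [biUnion_range_update_zero (·.Λ) F Q (A := P.Λ) rfl ht, ← hΛ₀, hΛ]
  · obtain ⟨y, hy⟩ := hsep i hi0 hi
    refine ⟨y, ?_⟩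
    rw [Function.update_of_ne hi0.ne', biUnion_range_update_zero (·.J) F Q (A := P.J) rfl hi0,
      inter_union_distrib_left, hy, disjoint_iff_inter_eq_empty.1 (hdisj.mono_left (hFJ i hi)),
      union_empty]
  · rcases Nat.eq_zero_or_pos i with rfl | hi0
    · simpa using IsQIMP.of_union (hQ 0 ht) hP rfl (hdisj.mono_left (hFJ 0 ht))
    · simpa [Function.update_of_ne hi0.ne'] using hQ i hi

theorem attach (h₀ : S₀.IsTreeOfQIMPs) (hP : P.IsQIMP) (hJ : S.J = S₀.J ∪ P.J)
    (hΛ : S.Λ = S₀.Λ ∪ P.Λ) (hcard : (S₀.J ∩ P.J).card ≤ 1) : S.IsTreeOfQIMPs := by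
  rcases (S₀.J ∩ P.J).eq_empty_or_nonempty with h | ⟨x, hx⟩
  · exact h₀.attach_disjoint hP hJ hΛ (disjoint_iff_inter_eq_empty.2 h)
  · exact h₀.attach_at_point hP hJ hΛ
      (eq_singleton_iff_unique_mem.2 ⟨hx, fun y hy => card_le_one.1 hcard y hy x hx⟩)

end IsTreeOfQIMPs

theorem IsUMP.isTreeOfQIMPs (hS : S.IsUMP) : S.IsTreeOfQIMPs := by
  induction hN : S.Λ.card using Nat.strong_induction_on generalizing S with
  | _ N ih =>
  rcases S.Λ.eq_empty_or_nonempty with hΛ | hΛ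
  · exact IsTreeOfQIMPs.of_Λ_eq_empty hΛ
  obtain ⟨Γ, hΓ⟩ := exists_minimal_of_wellFoundedLT S.IsPendant ⟨S.Λ, isPendant_Λ hΛ⟩
  obtain ⟨hΓΛ, hΓne, hbd⟩ := hΓ.prop
  let P := S.sub (Γ.biUnion id) Γ hΓΛ fun ℓ hℓ => subset_biUnion_of_mem id hℓ
  have hcard : (S.deleteLines Γ).Λ.card < N := hN ▸ card_lt_card (sdiff_ssubset hΓΛ hΓne)
  refine (ih _ hcard (hS.mono sdiff_subset) rfl).attach (P := P) (hS.isQIMP_of_minimal hΓ)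
    (deleteLines_J_union hΓΛ).symm (sdiff_union_of_subset hΓΛ).symm ?_
  show ((S.deleteLines Γ).J ∩ Γ.biUnion id).card ≤ 1
  rwa [deleteLines_J_inter]

end PLS

theorem statement_2 {α : Type} (S : PLS α) :
    S.IsUMP ↔ ∃ (t : ℕ) (F : ℕ → PLS α), 1 ≤ t ∧ S.IsTreeOf t F ∧
      ∀ i, i < t → (F i).IsQIMP :=
  ⟨fun h => h.isTreeOfQIMPs, fun ⟨_, _, _, htree, hQ⟩ => htree.isUMP hQ⟩
end
end
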